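/- arXiv:2211.12750 — 7 statements merged into one kernel-verified Lean document; each statement's English description precedes it below -/
import Mathlib

section
/- Let M be a strongly base orderable matroid with disjoint bases R₁, B₁ and disjoint bases R₂, B₂ satisfying R₁ ∪ B₁ = R₂ ∪ B₂. Let φ₁ : R₁ → B₁ be a bijection witnessing strong base orderability. Let G be the bipartite-like graph on R₁ ∪ B₁ whose edges pair each e ∈ R₁ with φ₁(e) and each f ∈ R₂ with φ₂(f) (for the analogous bijection φ₂ : R₂ → B₂), and let S, T be the two color classes of G. Then both S and T are bases of M. -/
/-! Each edge `{e, φ₁ e}` has exactly one endpoint in `S`, so `S` is obtained from `R₁` by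
exchanging the elements `X = R₁ ∩ T` for their partners `φ₁ '' X`; strong base orderability
makes this a basis. The same holds for `T` with `X = R₁ ∩ S`. -/

open Set

variable {α : Type*}

section Crossing

variable {f : α → α} {A B S T : Set α}

theorem eq_diff_union_image_of_crossing (hmaps : MapsTo f A B) (hsurj : SurjOn f A B)
    (hST : S ∪ T = A ∪ B) (hdST : Disjoint S T) (hcross : ∀ e ∈ A, (e ∈ S ↔ f e ∈ T)) :
    S = (A \ (A ∩ T)) ∪ f '' (A ∩ T) := by
  have hcover : ∀ a ∈ A ∪ B, a ∈ S ∨ a ∈ T := fun a ha => show a ∈ S ∪ T from hST ▸ ha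
  have hnot : ∀ a ∈ S, a ∉ T := fun a hS hT => hdST.ne_of_mem hS hT rfl
  ext a
  constructor
  · intro haS
    rcases (hST ▸ Or.inl haS : a ∈ A ∪ B) with haA | haB
    · exact Or.inl ⟨haA, fun h => hnot a haS h.2⟩
    · obtain ⟨e, heA, rfl⟩ := hsurj haB
      have heS : e ∉ S := fun h => hnot _ haS ((hcross e heA).mp h)
      exact Or.inr ⟨e, ⟨heA, (hcover e (Or.inl heA)).resolve_left heS⟩, rfl⟩
  · rintro (⟨haA, haT⟩ | ⟨e, ⟨heA, heT⟩, rfl⟩)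
    · exact (hcover a (Or.inl haA)).resolve_right fun h => haT ⟨haA, h⟩
    · have hfeT : f e ∉ T := fun h => hnot e ((hcross e heA).mpr h) heT
      exact (hcover _ (Or.inr (hmaps heA))).resolve_right hfeT

theorem crossing_symm (hmaps : MapsTo f A B) (hST : S ∪ T = A ∪ B) (hdST : Disjoint S T)
    (hcross : ∀ e ∈ A, (e ∈ S ↔ f e ∈ T)) : ∀ e ∈ A, (e ∈ T ↔ f e ∈ S) := by
  have hcover : ∀ a ∈ A ∪ B, a ∈ T ↔ a ∉ S := fun a ha =>
    ⟨fun hT hS => hdST.ne_of_mem hS hT rfl, fun hS => ((hST ▸ ha : a ∈ S ∪ T)).resolve_left hS⟩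
  intro e heA
  rw [hcover e (Or.inl heA), hcross e heA, ← not_iff_not, not_not,
    hcover _ (Or.inr (hmaps heA))]

end Crossing

theorem stmt4_general (M : Matroid α) (R₁ B₁ : Set α)
    (φ₁ : α → α)
    (hφ₁ : Set.BijOn φ₁ R₁ B₁) (hφ₁base : ∀ X ⊆ R₁, M.IsBase ((R₁ \ X) ∪ φ₁ '' X))
    (S T : Set α)
    (hST : S ∪ T = R₁ ∪ B₁) (hdST : Disjoint S T)
    (hcross₁ : ∀ e ∈ R₁, (e ∈ S ↔ φ₁ e ∈ T)) :
    M.IsBase S ∧ M.IsBase T := by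
  have hS := eq_diff_union_image_of_crossing hφ₁.mapsTo hφ₁.surjOn hST hdST hcross₁
  have hT := eq_diff_union_image_of_crossing hφ₁.mapsTo hφ₁.surjOn
    ((union_comm T S).trans hST) hdST.symm (crossing_symm hφ₁.mapsTo hST hdST hcross₁)
  exact ⟨hS ▸ hφ₁base _ inter_subset_left, hT ▸ hφ₁base _ inter_subset_left⟩

/-- For a strongly base orderable matroid `M` with disjoint bases `R₁, B₁` and disjoint
bases `R₂, B₂` satisfying `R₁ ∪ B₁ = R₂ ∪ B₂`, let `φ₁ : R₁ → B₁` and `φ₂ : R₂ → B₂` be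
bijections witnessing strong base orderability. If `S, T` are the two color classes of the
bipartite graph on `R₁ ∪ B₁` whose edges pair each `e ∈ R₁` with `φ₁ e` and each `f ∈ R₂`
with `φ₂ f` (i.e. `S, T` partition `R₁ ∪ B₁` and every such edge has one endpoint in `S`
and the other in `T`), then both `S` and `T` are bases of `M`. -/
theorem stmt4 (M : Matroid α) (R₁ B₁ R₂ B₂ : Set α)
    (hR₁ : M.IsBase R₁) (hB₁ : M.IsBase B₁) (hd₁ : Disjoint R₁ B₁)
    (hR₂ : M.IsBase R₂) (hB₂ : M.IsBase B₂) (hd₂ : Disjoint R₂ B₂)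
    (hcompat : R₁ ∪ B₁ = R₂ ∪ B₂)
    (φ₁ φ₂ : α → α)
    (hφ₁ : Set.BijOn φ₁ R₁ B₁) (hφ₁base : ∀ X ⊆ R₁, M.IsBase ((R₁ \ X) ∪ φ₁ '' X))
    (hφ₂ : Set.BijOn φ₂ R₂ B₂) (hφ₂base : ∀ X ⊆ R₂, M.IsBase ((R₂ \ X) ∪ φ₂ '' X))
    (S T : Set α)
    (hST : S ∪ T = R₁ ∪ B₁) (hdST : Disjoint S T)
    (hcross₁ : ∀ e ∈ R₁, (e ∈ S ↔ φ₁ e ∈ T))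
    (hcross₂ : ∀ f ∈ R₂, (f ∈ S ↔ φ₂ f ∈ T)) :
    M.IsBase S ∧ M.IsBase T :=
  stmt4_general M R₁ B₁ φ₁ hφ₁ hφ₁base S T hST hdST hcross₁
end

section
/- Let M be a strongly base orderable matroid with bases R₁ and S, and let φ₁ : R₁ → B₁ be a bijection witnessing strong base orderability between R₁ and B₁, where R₁ and B₁ are disjoint and S = (R₁ \ (R₁ \ S)) ∪ φ₁(R₁ \ S). Then exchanging the elements of R₁ \ S with their images φ₁(R₁ \ S) one at a time (in any order) yields a sequence of feasible symmetric exchanges transforming (R₁, B₁) into (S, (R₁ ∪ B₁) \ S). -/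
/-!
For `X ⊆ R₁`, exchanging every `x ∈ X` with `φ₁ x` turns `(R₁, B₁)` into the pair
`((R₁ \ X) ∪ φ₁ '' X, X ∪ φ₁ '' (R₁ \ X))`; both sides are bases by strong base
orderability, the second being the exchange of `R₁ \ X`. Passing from `X` to `insert e X`
is precisely the symmetric exchange of `e` with `φ₁ e`, so any enumeration of `R₁ \ S` is a
feasible walk from `X = ∅` to `X = R₁ \ S`, and the hypothesis on `S` identifies the last
pair as `(S, (R₁ ∪ B₁) \ S)`: its second side is the complement of its first in `R₁ ∪ B₁`.
-/

open Set

variable {α : Type*}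

/-- `SymExchSeq M P L Q` : the list `L` of pairs `(e, f)` records a sequence of feasible
symmetric exchanges transforming the pair of disjoint bases `P` into `Q`. -/
def SymExchSeq (M : Matroid α) : Set α × Set α → List (α × α) → Set α × Set α → Prop
  | P, [], Q => P = Q
  | P, (e, f) :: L, Q =>
      ∃ P' : Set α × Set α, e ∈ P.1 ∧ f ∈ P.2 ∧
        P'.1 = insert f (P.1 \ {e}) ∧ P'.2 = insert e (P.2 \ {f}) ∧
        M.IsBase P'.1 ∧ M.IsBase P'.2 ∧ SymExchSeq M P' L Q

section PartialExchange

variable {M : Matroid α} {R X : Set α} {φ : α → α} {e : α}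

def partialExchange (R : Set α) (φ : α → α) (X : Set α) : Set α × Set α :=
  ((R \ X) ∪ φ '' X, X ∪ φ '' (R \ X))

@[simp]
lemma partialExchange_empty : partialExchange R φ ∅ = (R, φ '' R) := by
  simp [partialExchange]

lemma partialExchange_insert (hφ : InjOn φ R) (hd : Disjoint R (φ '' R)) (hX : X ⊆ R)
    (heR : e ∈ R) (heX : e ∉ X) :
    partialExchange R φ (insert e X) =
      (insert (φ e) ((partialExchange R φ X).1 \ {e}),
        insert e ((partialExchange R φ X).2 \ {φ e})) := by
  have he_notin_image : e ∉ φ '' X := fun h => hd.notMem_of_mem_left heR (image_mono hX h)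
  have hφe_notin : φ e ∉ X := fun h => hd.notMem_of_mem_right (mem_image_of_mem φ heR) (hX h)
  have hφ_diff : φ '' (R \ insert e X) = φ '' (R \ X) \ {φ e} := by
    rw [← union_singleton, ← sdiff_sdiff, (hφ.mono sdiff_subset).image_sdiff_subset
      (singleton_subset_iff.2 ⟨heR, heX⟩), image_singleton]
  simp only [partialExchange, Prod.mk.injEq]
  constructor
  · rw [image_insert_eq, union_insert, union_sdiff_distrib,
      sdiff_singleton_eq_self he_notin_image, sdiff_sdiff, union_singleton]
  · rw [hφ_diff, union_sdiff_distrib,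
      sdiff_singleton_eq_self hφe_notin, insert_union]

lemma partialExchange_isBase (hbase : ∀ X ⊆ R, M.IsBase ((R \ X) ∪ φ '' X)) (hX : X ⊆ R) :
    M.IsBase (partialExchange R φ X).1 ∧ M.IsBase (partialExchange R φ X).2 := by
  refine ⟨hbase X hX, ?_⟩
  simpa [partialExchange, sdiff_sdiff_cancel_left hX] using hbase (R \ X) sdiff_subset

lemma partialExchange_snd (hφ : InjOn φ R) (hd : Disjoint R (φ '' R)) (hX : X ⊆ R) :
    (partialExchange R φ X).2 = (R ∪ φ '' R) \ (partialExchange R φ X).1 := by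
  have hR : R \ ((R \ X) ∪ φ '' X) = X := by
    rw [← sdiff_sdiff, sdiff_sdiff_cancel_left hX, (hd.mono hX (image_mono hX)).sdiff_eq_left]
  have hφR : φ '' R \ ((R \ X) ∪ φ '' X) = φ '' (R \ X) := by
    rw [← sdiff_sdiff, (hd.symm.mono_right sdiff_subset).sdiff_eq_left,
      hφ.image_sdiff_subset hX]
  rw [partialExchange, union_sdiff_distrib, hR, hφR]

lemma symExchSeq_partialExchange (hφ : InjOn φ R) (hd : Disjoint R (φ '' R))
    (hbase : ∀ X ⊆ R, M.IsBase ((R \ X) ∪ φ '' X)) (L : List α) (hL : L.Nodup) (X : Set α)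
    (hX : X ⊆ R) (hLX : ∀ a ∈ L, a ∈ R \ X) :
    SymExchSeq M (partialExchange R φ X) (L.map fun a => (a, φ a))
      (partialExchange R φ (X ∪ {a | a ∈ L})) := by
  induction L generalizing X with
  | nil => simp [SymExchSeq]
  | cons e L ih =>
    obtain ⟨heL, hL⟩ := List.nodup_cons.mp hL
    obtain ⟨heR, heX⟩ := hLX e List.mem_cons_self
    have hinsert := partialExchange_insert hφ hd hX heR heX
    obtain ⟨hbase₁, hbase₂⟩ := partialExchange_isBase hbase (insert_subset heR hX)
    have hnext : ∀ a ∈ L, a ∈ R \ insert e X := fun a ha =>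
      ⟨(hLX a (List.mem_cons_of_mem e ha)).1,
        fun h => (mem_insert_iff.1 h).elim (ne_of_mem_of_not_mem ha heL)
          (hLX a (List.mem_cons_of_mem e ha)).2⟩
    have hunion : insert e X ∪ {a | a ∈ L} = X ∪ {a | a ∈ e :: L} := by
      ext a; simp only [mem_union, mem_insert_iff, mem_ofPred_eq, List.mem_cons]; tauto
    refine ⟨partialExchange R φ (insert e X), Or.inl ⟨heR, heX⟩,
      Or.inr (mem_image_of_mem φ ⟨heR, heX⟩), congrArg Prod.fst hinsert,
      congrArg Prod.snd hinsert, hbase₁, hbase₂, ?_⟩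
    exact hunion ▸ ih hL (insert e X) (insert_subset heR hX) hnext

end PartialExchange

theorem stmt5_general (M : Matroid α) (R₁ B₁ S : Set α)
    (hd₁ : Disjoint R₁ B₁)
    (φ₁ : α → α) (hφ₁ : Set.BijOn φ₁ R₁ B₁)
    (hφ₁base : ∀ X ⊆ R₁, M.IsBase ((R₁ \ X) ∪ φ₁ '' X))
    (hSeq : S = (R₁ \ (R₁ \ S)) ∪ φ₁ '' (R₁ \ S))
    (L : List α) (hnodup : L.Nodup) (hmem : ∀ a : α, a ∈ L ↔ a ∈ R₁ \ S) :
    SymExchSeq M (R₁, B₁) (L.map fun a => (a, φ₁ a)) (S, (R₁ ∪ B₁) \ S) := by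
  have hφ := hφ₁.injOn
  have hd : Disjoint R₁ (φ₁ '' R₁) := hφ₁.image_eq ▸ hd₁
  have hend : partialExchange R₁ φ₁ (R₁ \ S) = (S, (R₁ ∪ B₁) \ S) := by
    have hfst : (partialExchange R₁ φ₁ (R₁ \ S)).1 = S := hSeq.symm
    rw [Prod.ext_iff, partialExchange_snd hφ hd sdiff_subset, hfst, hφ₁.image_eq]
    exact ⟨rfl, rfl⟩
  have hL : {a | a ∈ L} = R₁ \ S := Set.ext hmem
  have hseq := symExchSeq_partialExchange hφ hd hφ₁base L hnodup ∅ (empty_subset R₁)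
    fun a ha => ⟨((hmem a).1 ha).1, notMem_empty a⟩
  rwa [partialExchange_empty, hφ₁.image_eq, empty_union, hL, hend] at hseq

/-- Let `φ₁ : R₁ → B₁` be a bijection witnessing strong base orderability between the
disjoint bases `R₁` and `B₁`, and let `S` be a basis with
`S = (R₁ \ (R₁ \ S)) ∪ φ₁ '' (R₁ \ S)`. Then exchanging the elements of `R₁ \ S` with
their images under `φ₁` one at a time, in any order (given by a duplicate-free list `L`
enumerating `R₁ \ S`), is a feasible sequence of symmetric exchanges transforming
`(R₁, B₁)` into `(S, (R₁ ∪ B₁) \ S)`. -/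
theorem stmt5 (M : Matroid α) (R₁ B₁ S : Set α)
    (hR₁ : M.IsBase R₁) (hB₁ : M.IsBase B₁) (hd₁ : Disjoint R₁ B₁) (hS : M.IsBase S)
    (φ₁ : α → α) (hφ₁ : Set.BijOn φ₁ R₁ B₁)
    (hφ₁base : ∀ X ⊆ R₁, M.IsBase ((R₁ \ X) ∪ φ₁ '' X))
    (hSeq : S = (R₁ \ (R₁ \ S)) ∪ φ₁ '' (R₁ \ S))
    (L : List α) (hnodup : L.Nodup) (hmem : ∀ a : α, a ∈ L ↔ a ∈ R₁ \ S) :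
    SymExchSeq M (R₁, B₁) (L.map fun a => (a, φ₁ a)) (S, (R₁ ∪ B₁) \ S) :=
  stmt5_general M R₁ B₁ S hd₁ φ₁ hφ₁ hφ₁base hSeq L hnodup hmem
end

section
/- Let M be a rank-r elementary split matroid defined by hyperedges H₁,…,H_q with bounds r₁,…,r_q, and suppose R₁, B₁, R₂, B₂ are bases with R₁ ∪ B₁ = R₂ ∪ B₂ (disjoint unions), with R₁, R₂ both H₁-tight and H₃-tight, B₁, B₂ both H₂-tight and H₄-tight, (R₁ ∩ B₂) ∪ (B₁ ∩ R₂) ⊆ (H₁ △ H₃) ∩ (H₂ △ H₄), and |B₁ ∩ R₂ ∩ H₂ ∩ H₃| > 0. Then |((R₁ ∩ R₂) ∪ (B₁ ∩ B₂)) \ (H₁ △ H₃)| ≥ 2. -/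
/-!
A base `F` that is tight for two hyperedges `Hᵢ, Hⱼ` makes the split inequality
`|Hᵢ ∩ Hⱼ| + r ≤ kᵢ + kⱼ` an equality and satisfies `Hᵢ ∩ Hⱼ ⊆ F ⊆ Hᵢ ∪ Hⱼ`. Doing this for the
pairs `(H₁, H₃)` and `(H₂, H₄)` and comparing with the split inequalities for `(H₁, H₄)` and
`(H₂, H₃)` gives `|H₁ ∩ H₄| + |H₂ ∩ H₃| ≤ |H₁ ∩ H₃| + |H₂ ∩ H₄|`. Counting element by element,
the right side exceeds the left by at most `|G| - N`, where `G` is the set in the conclusion and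
`N` counts the exchanged elements `(R₁ ∩ B₂) ∪ (B₁ ∩ R₂)` lying in `H₁ ∩ H₄` or in `H₂ ∩ H₃`;
so `N ≤ |G|`. Finally, since `R₁, R₂` meet `H₁` and `B₁, B₂` meet `H₂` in equally many elements,
`N = 2 (|B₁ ∩ R₂ ∩ H₂ ∩ H₃| + |R₁ ∩ B₂ ∩ H₁ ∩ H₄|) ≥ 2`.
-/

open Set symmDiff

variable {α : Type*}

theorem Set.ncard_eq_sum_ite {E S : Set α} [DecidablePred (· ∈ S)] (hE : E.Finite)
    (hS : S ⊆ E) : S.ncard = ∑ x ∈ hE.toFinset, if x ∈ S then 1 else 0 := by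
  rw [Finset.sum_boole, Nat.cast_id, ← ncard_coe_finset]
  congr 1
  ext x
  simpa using fun h => hS h

theorem inter_subset_and_subset_union_of_tight {F Hᵢ Hⱼ : Set α} {r kᵢ kⱼ : ℕ} (hF : F.Finite)
    (hH : (Hᵢ ∩ Hⱼ).Finite) (hFr : F.ncard ≤ r) (hsplit : (Hᵢ ∩ Hⱼ).ncard + r ≤ kᵢ + kⱼ)
    (hᵢ : (F ∩ Hᵢ).ncard = kᵢ) (hⱼ : (F ∩ Hⱼ).ncard = kⱼ) :
    Hᵢ ∩ Hⱼ ⊆ F ∧ F ⊆ Hᵢ ∪ Hⱼ ∧ kᵢ + kⱼ = r + (Hᵢ ∩ Hⱼ).ncard := by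
  have hsum : (F ∩ (Hᵢ ∪ Hⱼ)).ncard + (F ∩ (Hᵢ ∩ Hⱼ)).ncard = kᵢ + kⱼ := by
    rw [← hᵢ, ← hⱼ, inter_union_distrib_left, inter_inter_distrib_left,
      ncard_union_add_ncard_inter _ _ (hF.inter_of_left _) (hF.inter_of_left _)]
  have hunion := ncard_le_ncard (inter_subset_left (t := Hᵢ ∪ Hⱼ)) hF
  have hinter := ncard_le_ncard (inter_subset_right (s := F)) hH
  exact ⟨inter_eq_right.mp (eq_of_subset_of_ncard_le inter_subset_right (by omega) hH),
    inter_eq_left.mp (eq_of_subset_of_ncard_le inter_subset_left (by omega) hF), by omega⟩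

theorem ncard_inter_pairs_le_ncard_cross {H₁ H₂ H₃ H₄ P Q Z : Set α} (h₁ : H₁.Finite)
    (h₂ : H₂.Finite) (hP : P.Finite) (hQ : Q.Finite) (h₁₃ : H₁ ∩ H₃ ⊆ P) (h₂₄ : H₂ ∩ H₄ ⊆ Q)
    (hZ : Z ⊆ (H₁ ∆ H₃) ∩ (H₂ ∆ H₄)) :
    (H₁ ∩ H₃).ncard + (H₂ ∩ H₄).ncard + (Z ∩ H₁ ∩ H₄).ncard + (Z ∩ H₂ ∩ H₃).ncard ≤
      (H₁ ∩ H₄).ncard + (H₂ ∩ H₃).ncard + ((P ∪ Q) \ (H₁ ∆ H₃)).ncard := by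
  classical
  have hE := ((h₁.union h₂).union hP).union hQ
  simp (disch := grind) only [ncard_eq_sum_ite hE]
  simp only [← Finset.sum_add_distrib]
  refine Finset.sum_le_sum fun x _ => ?_
  have := @h₁₃ x; have := @h₂₄ x; have := @hZ x
  grind

theorem two_mul_ncard_le_ncard_cross {R₁ B₁ R₂ B₂ H₁ H₂ H₃ H₄ : Set α} (hR₁ : R₁.Finite)
    (hB₁ : B₁.Finite) (hd₂ : Disjoint R₂ B₂) (hcompat : R₁ ∪ B₁ = R₂ ∪ B₂)
    (hR₁H : R₁ ⊆ H₁ ∪ H₃) (hB₁H : B₁ ⊆ H₂ ∪ H₄) (hX : B₁ ∩ R₂ ⊆ H₁ ∆ H₃)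
    (h₁ : (R₁ ∩ H₁).ncard = (R₂ ∩ H₁).ncard) (h₂ : (B₁ ∩ H₂).ncard = (B₂ ∩ H₂).ncard) :
    2 * (B₁ ∩ R₂ ∩ H₂ ∩ H₃).ncard ≤
      (((R₁ ∩ B₂) ∪ (B₁ ∩ R₂)) ∩ H₁ ∩ H₄).ncard + (((R₁ ∩ B₂) ∪ (B₁ ∩ R₂)) ∩ H₂ ∩ H₃).ncard := by
  classical
  have hE : (R₁ ∪ B₁ ∪ R₂ ∪ B₂).Finite := by
    rw [union_assoc _ R₂, ← hcompat, union_self]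
    exact hR₁.union hB₁
  suffices (R₂ ∩ H₁).ncard + (B₂ ∩ H₂).ncard + 2 * (B₁ ∩ R₂ ∩ H₂ ∩ H₃).ncard ≤
      (R₁ ∩ H₁).ncard + (B₁ ∩ H₂).ncard + (((R₁ ∩ B₂) ∪ (B₁ ∩ R₂)) ∩ H₁ ∩ H₄).ncard +
        (((R₁ ∩ B₂) ∪ (B₁ ∩ R₂)) ∩ H₂ ∩ H₃).ncard by omega
  simp (disch := grind) only [ncard_eq_sum_ite hE]
  simp only [Finset.mul_sum, ← Finset.sum_add_distrib]
  refine Finset.sum_le_sum fun x _ => ?_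
  have := congrArg (x ∈ ·) hcompat; have := @hR₁H x; have := @hB₁H x; have := @hX x
  have := hd₂.notMem_of_mem_left (a := x)
  grind

theorem stmt7_general (M : Matroid α) [M.Finite] (r q : ℕ) (H : Fin q → Set α) (k : Fin q → ℕ)
    (hHE : ∀ i, H i ⊆ M.E)
    (hsplit : ∀ i j, i ≠ j → (H i ∩ H j).ncard + r ≤ k i + k j)
    (hindep : ∀ X, M.Indep X ↔ X ⊆ M.E ∧ X.ncard ≤ r ∧ ∀ i, (X ∩ H i).ncard ≤ k i)
    (i₁ i₂ i₃ i₄ : Fin q)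
    (hdist : i₁ ≠ i₂ ∧ i₁ ≠ i₃ ∧ i₁ ≠ i₄ ∧ i₂ ≠ i₃ ∧ i₂ ≠ i₄ ∧ i₃ ≠ i₄)
    (R₁ B₁ R₂ B₂ : Set α)
    (hR₁ : M.IsBase R₁) (hB₁ : M.IsBase B₁)
    (hR₂ : M.IsBase R₂) (hB₂ : M.IsBase B₂) (hd₂ : Disjoint R₂ B₂)
    (hcompat : R₁ ∪ B₁ = R₂ ∪ B₂)
    (hR₁t₁ : (R₁ ∩ H i₁).ncard = k i₁) (hR₁t₃ : (R₁ ∩ H i₃).ncard = k i₃)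
    (hR₂t₁ : (R₂ ∩ H i₁).ncard = k i₁) (hR₂t₃ : (R₂ ∩ H i₃).ncard = k i₃)
    (hB₁t₂ : (B₁ ∩ H i₂).ncard = k i₂) (hB₁t₄ : (B₁ ∩ H i₄).ncard = k i₄)
    (hB₂t₂ : (B₂ ∩ H i₂).ncard = k i₂) (hB₂t₄ : (B₂ ∩ H i₄).ncard = k i₄)
    (hsub : (R₁ ∩ B₂) ∪ (B₁ ∩ R₂) ⊆ (H i₁ ∆ H i₃) ∩ (H i₂ ∆ H i₄))
    (hpos : (B₁ ∩ R₂ ∩ H i₂ ∩ H i₃).Nonempty) :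
    2 ≤ (((R₁ ∩ R₂) ∪ (B₁ ∩ B₂)) \ (H i₁ ∆ H i₃)).ncard := by
  obtain ⟨-, h₁₃, h₁₄, h₂₃, h₂₄, -⟩ := hdist
  have hH (i : Fin q) : (H i).Finite := M.ground_finite.subset (hHE i)
  have tight {F : Set α} {i j : Fin q} (hF : M.IsBase F) (hij : i ≠ j) :
      (F ∩ H i).ncard = k i → (F ∩ H j).ncard = k j →
        H i ∩ H j ⊆ F ∧ F ⊆ H i ∪ H j ∧ k i + k j = r + (H i ∩ H j).ncard :=
    inter_subset_and_subset_union_of_tight hF.finite ((hH i).inter_of_left _)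
      ((hindep F).1 hF.indep).2.1 (hsplit i j hij)
  obtain ⟨hR₁₃, hR₁H, hk₁₃⟩ := tight hR₁ h₁₃ hR₁t₁ hR₁t₃
  obtain ⟨hR₂₃, -, -⟩ := tight hR₂ h₁₃ hR₂t₁ hR₂t₃
  obtain ⟨hB₁₄, hB₁H, hk₂₄⟩ := tight hB₁ h₂₄ hB₁t₂ hB₁t₄
  obtain ⟨hB₂₄, -, -⟩ := tight hB₂ h₂₄ hB₂t₂ hB₂t₄
  have hcross := ncard_inter_pairs_le_ncard_cross (hH i₁) (hH i₂)
    (hR₁.finite.inter_of_left R₂) (hB₁.finite.inter_of_left B₂)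
    (subset_inter hR₁₃ hR₂₃) (subset_inter hB₁₄ hB₂₄) hsub
  have hexchange := two_mul_ncard_le_ncard_cross hR₁.finite hB₁.finite hd₂ hcompat hR₁H hB₁H
    (subset_union_right.trans (hsub.trans inter_subset_left))
    (hR₁t₁.trans hR₂t₁.symm) (hB₁t₂.trans hB₂t₂.symm)
  have hwitness : 0 < (B₁ ∩ R₂ ∩ H i₂ ∩ H i₃).ncard :=
    (ncard_pos (hB₁.finite.subset fun _ hx => hx.1.1.1)).2 hpos
  have hs₁₄ := hsplit i₁ i₄ h₁₄
  have hs₂₃ := hsplit i₂ i₃ h₂₃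
  omega

/-- In a rank-`r` elementary split matroid given by hyperedges `H i` with bounds `k i`,
suppose `R₁, B₁, R₂, B₂` are bases with `R₁ ∪ B₁ = R₂ ∪ B₂` (disjoint unions), `R₁, R₂`
both `H i₁`- and `H i₃`-tight, `B₁, B₂` both `H i₂`- and `H i₄`-tight,
`(R₁ ∩ B₂) ∪ (B₁ ∩ R₂) ⊆ (H i₁ ∆ H i₃) ∩ (H i₂ ∆ H i₄)` and
`B₁ ∩ R₂ ∩ H i₂ ∩ H i₃ ≠ ∅`. Then `|((R₁ ∩ R₂) ∪ (B₁ ∩ B₂)) \ (H i₁ ∆ H i₃)| ≥ 2`. -/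
theorem stmt7 (M : Matroid α) [M.Finite] (r q : ℕ) (H : Fin q → Set α) (k : Fin q → ℕ)
    (hHE : ∀ i, H i ⊆ M.E) (hrE : r ≤ M.E.ncard)
    (hsplit : ∀ i j, i ≠ j → (H i ∩ H j).ncard + r ≤ k i + k j)
    (hcover : ∀ i, r ≤ (M.E \ H i).ncard + k i)
    (hindep : ∀ X, M.Indep X ↔ X ⊆ M.E ∧ X.ncard ≤ r ∧ ∀ i, (X ∩ H i).ncard ≤ k i)
    (i₁ i₂ i₃ i₄ : Fin q)
    (hdist : i₁ ≠ i₂ ∧ i₁ ≠ i₃ ∧ i₁ ≠ i₄ ∧ i₂ ≠ i₃ ∧ i₂ ≠ i₄ ∧ i₃ ≠ i₄)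
    (R₁ B₁ R₂ B₂ : Set α)
    (hR₁ : M.IsBase R₁) (hB₁ : M.IsBase B₁) (hd₁ : Disjoint R₁ B₁)
    (hR₂ : M.IsBase R₂) (hB₂ : M.IsBase B₂) (hd₂ : Disjoint R₂ B₂)
    (hcompat : R₁ ∪ B₁ = R₂ ∪ B₂)
    (hR₁t₁ : (R₁ ∩ H i₁).ncard = k i₁) (hR₁t₃ : (R₁ ∩ H i₃).ncard = k i₃)
    (hR₂t₁ : (R₂ ∩ H i₁).ncard = k i₁) (hR₂t₃ : (R₂ ∩ H i₃).ncard = k i₃)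
    (hB₁t₂ : (B₁ ∩ H i₂).ncard = k i₂) (hB₁t₄ : (B₁ ∩ H i₄).ncard = k i₄)
    (hB₂t₂ : (B₂ ∩ H i₂).ncard = k i₂) (hB₂t₄ : (B₂ ∩ H i₄).ncard = k i₄)
    (hsub : (R₁ ∩ B₂) ∪ (B₁ ∩ R₂) ⊆ (H i₁ ∆ H i₃) ∩ (H i₂ ∆ H i₄))
    (hpos : (B₁ ∩ R₂ ∩ H i₂ ∩ H i₃).Nonempty) :
    2 ≤ (((R₁ ∩ R₂) ∪ (B₁ ∩ B₂)) \ (H i₁ ∆ H i₃)).ncard :=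
  stmt7_general M r q H k hHE hsplit hindep i₁ i₂ i₃ i₄ hdist R₁ B₁ R₂ B₂ hR₁ hB₁ hR₂ hB₂ hd₂
    hcompat hR₁t₁ hR₁t₃ hR₂t₁ hR₂t₃ hB₁t₂ hB₁t₄ hB₂t₂ hB₂t₄ hsub hpos
end

section
/- Let P₁ = (R₁, B₁) and P₂ = (R₂, B₂) be colorings (partitions into two disjoint spanning trees) of a wheel graph G on n vertices that have the same orientation. Then there exists a strictly monotone sequence of symmetric exchanges transforming P₁ into P₂, of length exactly (n−1) − |R₁ ∩ R₂|. -/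
open Set symmDiff

/-- The wheel graph whose outer cycle has vertex set `ZMod m` (`m ≥ 3`): the center `none`
is joined to every outer vertex, and outer vertices `some i`, `some (i+1)` are adjacent. -/
def wheelGraph (m : ℕ) : SimpleGraph (Option (ZMod m)) where
  Adj u v := u ≠ v ∧ (u = none ∨ v = none ∨
    ∃ i : ZMod m, (u = some i ∧ v = some (i + 1)) ∨ (v = some i ∧ u = some (i + 1)))
  symm := by
    constructor
    rintro u v ⟨hne, h⟩
    refine ⟨hne.symm, ?_⟩
    rcases h with h | h | ⟨i, h | h⟩
    · exact Or.inr (Or.inl h)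
    · exact Or.inl h
    · exact Or.inr (Or.inr ⟨i, Or.inr h⟩)
    · exact Or.inr (Or.inr ⟨i, Or.inl h⟩)
  loopless := ⟨fun u h => h.1 rfl⟩

/-- The spoke joining the center to the outer vertex `i`. -/
def spokeE (m : ℕ) (i : ZMod m) : Sym2 (Option (ZMod m)) := s(none, some i)

/-- The rim edge joining the outer vertices `i` and `i + 1`. -/
def rimE (m : ℕ) (i : ZMod m) : Sym2 (Option (ZMod m)) := s(some i, some (i + 1))

/-- `T` is the edge set of a spanning tree of the wheel: a set of wheel edges whose
associated graph is connected and acyclic. -/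
def IsTreeSet (m : ℕ) (T : Set (Sym2 (Option (ZMod m)))) : Prop :=
  T ⊆ (wheelGraph m).edgeSet ∧ (SimpleGraph.fromEdgeSet T).Connected ∧
    (SimpleGraph.fromEdgeSet T).IsAcyclic

/-- A coloring of the wheel: a partition of its edge set into two spanning trees. -/
def IsWheelColoring (m : ℕ)
    (P : Set (Sym2 (Option (ZMod m))) × Set (Sym2 (Option (ZMod m)))) : Prop :=
  IsTreeSet m P.1 ∧ IsTreeSet m P.2 ∧ Disjoint P.1 P.2 ∧
    P.1 ∪ P.2 = (wheelGraph m).edgeSet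

/-- `WExchSeq m P L Q` : the list `L` of pairs `(e, f)` records a sequence of feasible
symmetric exchanges (each swapping a red edge `e` with a blue edge `f`, both color classes
remaining spanning trees) transforming the coloring `P` into `Q`. -/
def WExchSeq (m : ℕ) :
    Set (Sym2 (Option (ZMod m))) × Set (Sym2 (Option (ZMod m))) →
    List (Sym2 (Option (ZMod m)) × Sym2 (Option (ZMod m))) →
    Set (Sym2 (Option (ZMod m))) × Set (Sym2 (Option (ZMod m))) → Prop
  | P, [], Q => P = Q
  | P, (e, f) :: L, Q =>
      ∃ P' : Set (Sym2 (Option (ZMod m))) × Set (Sym2 (Option (ZMod m))),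
        e ∈ P.1 ∧ f ∈ P.2 ∧
        P'.1 = insert f (P.1 \ {e}) ∧ P'.2 = insert e (P.2 \ {f}) ∧
        IsWheelColoring m P' ∧ WExchSeq m P' L Q

/-- A coloring has positive orientation if every boundary rim edge (a rim edge whose two
neighbouring spokes have different colors) has the color of the spoke preceding it in the
counterclockwise (positive) direction. -/
def PositiveOrientation (m : ℕ)
    (P : Set (Sym2 (Option (ZMod m))) × Set (Sym2 (Option (ZMod m)))) : Prop :=
  ∀ i : ZMod m, (spokeE m i ∈ P.1 ↔ spokeE m (i + 1) ∈ P.1) ∨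
    (rimE m i ∈ P.1 ↔ spokeE m i ∈ P.1)

/-- A coloring has negative orientation if every boundary rim edge has the color of the
spoke following it in the positive direction. -/
def NegativeOrientation (m : ℕ)
    (P : Set (Sym2 (Option (ZMod m))) × Set (Sym2 (Option (ZMod m)))) : Prop :=
  ∀ i : ZMod m, (spokeE m i ∈ P.1 ↔ spokeE m (i + 1) ∈ P.1) ∨
    (rimE m i ∈ P.1 ↔ spokeE m (i + 1) ∈ P.1)

/-- Two colorings have the same orientation. -/
def SameOrientation (m : ℕ)
    (P Q : Set (Sym2 (Option (ZMod m))) × Set (Sym2 (Option (ZMod m)))) : Prop :=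
  (PositiveOrientation m P ∧ PositiveOrientation m Q) ∨
    (NegativeOrientation m P ∧ NegativeOrientation m Q)

/-- Two colorings have different orientations. -/
def DifferentOrientation (m : ℕ)
    (P Q : Set (Sym2 (Option (ZMod m))) × Set (Sym2 (Option (ZMod m)))) : Prop :=
  (PositiveOrientation m P ∧ NegativeOrientation m Q) ∨
    (NegativeOrientation m P ∧ PositiveOrientation m Q)

/-- The number of intervals (maximal runs of consecutive same-colored spokes) of a
coloring: the number of boundaries, i.e. of indices `i` such that the spokes `i` and
`i + 1` have different colors. -/
noncomputable def intervalCount (m : ℕ)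
    (P : Set (Sym2 (Option (ZMod m))) × Set (Sym2 (Option (ZMod m)))) : ℕ :=
  {i : ZMod m | ¬ (spokeE m i ∈ P.1 ↔ spokeE m (i + 1) ∈ P.1)}.ncard

/-- The total weight of a sequence of symmetric exchanges. -/
def wSeqWeight (m : ℕ) (w : Sym2 (Option (ZMod m)) → NNReal)
    (L : List (Sym2 (Option (ZMod m)) × Sym2 (Option (ZMod m)))) : NNReal :=
  (L.map fun p => w p.1 + w p.2).sum

/-- The number of times an exchange sequence uses the edge `a`. -/
def wUsesCount (m : ℕ) (L : List (Sym2 (Option (ZMod m)) × Sym2 (Option (ZMod m))))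
    (a : Sym2 (Option (ZMod m))) : ℕ :=
  (L.map Prod.fst).count a + (L.map Prod.snd).count a

/-!
Fix the orientation through `c ∈ {0, 1}` (`c = 1` positive, `c = 0` negative). By the
orientation at boundary rim edges, and because a tree contains no triangle at the others, the
rim edge `i` has the color opposite to the spoke `i + c`. So a coloring is determined by its
set `S` of red spokes: each outer vertex `y` owns exactly one red edge, its spoke if `y ∈ S`
and the rim edge `y - c` otherwise. Conversely, for every `S ≠ ∅, univ` these `m` edges form a
spanning tree, since they connect every vertex to the centre and a connected graph on `m + 1`
vertices with `m` edges is a tree.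

Flipping a vertex `i ∈ S₁ ∆ S₂` is then a symmetric exchange of spoke `i` with rim edge
`i - c`, taking an edge of `R₁ ∩ B₂` and one of `B₁ ∩ R₂`. Flipping the vertices of
`S₁ ∆ S₂` one by one, in an order that keeps `S` nonempty and proper (possible because
`m ≥ 3`), gives a strictly monotone sequence of length `|S₁ ∆ S₂| = m - |R₁ ∩ R₂|`.
-/

section StrictlyMonotone

variable {α : Type*}

def IsStrictlyMonotone (P Q : Set α × Set α) (L : List (α × α)) : Prop :=
  (∀ p ∈ L, p.1 ∈ P.1 ∩ Q.2 ∧ p.2 ∈ P.2 ∩ Q.1) ∧ (L.map Prod.fst ++ L.map Prod.snd).Nodup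

lemma IsStrictlyMonotone.cons {P P' Q : Set α × Set α} {e f : α} {L : List (α × α)}
    (hQ : Disjoint Q.1 Q.2) (he : e ∈ P.1 ∩ Q.2) (hf : f ∈ P.2 ∩ Q.1)
    (h₁ : P'.1 = insert f (P.1 \ {e})) (h₂ : P'.2 = insert e (P.2 \ {f}))
    (hL : IsStrictlyMonotone P' Q L) : IsStrictlyMonotone P Q ((e, f) :: L) := by
  obtain ⟨hmem, hnd⟩ := hL
  have hne : ∀ {x y}, x ∈ Q.2 → y ∈ Q.1 → x ≠ y := fun hx hy h =>
    disjoint_left.1 hQ hy (h ▸ hx)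
  refine ⟨?_, ?_⟩
  · rintro p (_ | ⟨_, hp⟩)
    · exact ⟨he, hf⟩
    obtain ⟨⟨hp₁, hp₁Q⟩, hp₂, hp₂Q⟩ := hmem p hp
    rw [h₁] at hp₁
    rw [h₂] at hp₂
    exact ⟨⟨(hp₁.resolve_left (hne hp₁Q hf.2)).1, hp₁Q⟩,
      (hp₂.resolve_left (hne he.2 hp₂Q).symm).1, hp₂Q⟩
  · simp only [List.map_cons, List.cons_append, List.nodup_cons, List.nodup_middle,
      List.mem_cons, List.mem_append, List.mem_map]
    refine ⟨?_, ?_, hnd⟩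
    · rintro (⟨p, hp, rfl⟩ | rfl | ⟨p, hp, rfl⟩)
      · simpa [h₁, hne he.2 hf.2] using (hmem p hp).1.1
      · exact hne he.2 hf.2 rfl
      · exact hne he.2 (hmem p hp).2.2 rfl
    · rintro (⟨p, hp, rfl⟩ | ⟨p, hp, rfl⟩)
      · exact hne (hmem p hp).1.2 hf.2 rfl
      · simpa [h₂, (hne he.2 hf.2).symm] using (hmem p hp).2.1

end StrictlyMonotone

namespace Wheel

variable {m : ℕ}

lemma natCast_ne_zero_of_lt {k : ℕ} (hk₀ : 0 < k) (hk : k < m) : (k : ZMod m) ≠ 0 := by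
  rw [Ne, ZMod.natCast_eq_zero_iff]
  exact Nat.not_dvd_of_pos_of_lt hk₀ hk

@[simp]
lemma spokeE_inj {i j : ZMod m} : spokeE m i = spokeE m j ↔ i = j := by
  simp [spokeE]

@[simp]
lemma spokeE_ne_rimE (i j : ZMod m) : spokeE m i ≠ rimE m j := by
  simp [spokeE, rimE]

@[simp]
lemma rimE_ne_spokeE (i j : ZMod m) : rimE m i ≠ spokeE m j :=
  (spokeE_ne_rimE j i).symm

lemma rimE_inj (hm : 3 ≤ m) {i j : ZMod m} : rimE m i = rimE m j ↔ i = j := by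
  refine ⟨fun h => ?_, congrArg _⟩
  simp only [rimE, Sym2.eq_iff, Option.some.injEq] at h
  rcases h with ⟨h, -⟩ | ⟨rfl, h⟩
  · exact h
  · have : ((2 : ℕ) : ZMod m) = 0 := by push_cast; linear_combination h
    exact absurd this (natCast_ne_zero_of_lt two_pos (by omega))

lemma spokeE_mem_edgeSet (i : ZMod m) : spokeE m i ∈ (wheelGraph m).edgeSet :=
  ⟨by simp, Or.inl rfl⟩

lemma rimE_mem_edgeSet (hm : 3 ≤ m) (i : ZMod m) : rimE m i ∈ (wheelGraph m).edgeSet := by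
  refine ⟨fun h => ?_, Or.inr (Or.inr ⟨i, Or.inl ⟨rfl, rfl⟩⟩)⟩
  have : ((1 : ℕ) : ZMod m) = 0 := by push_cast; linear_combination -Option.some.inj h
  exact natCast_ne_zero_of_lt one_pos (by omega) this

lemma exists_eq_spokeE_or_rimE {e : Sym2 (Option (ZMod m))} (he : e ∈ (wheelGraph m).edgeSet) :
    ∃ i, e = spokeE m i ∨ e = rimE m i := by
  induction e with
  | h u v =>
    obtain ⟨huv, rfl | rfl | ⟨i, ⟨rfl, rfl⟩ | ⟨rfl, rfl⟩⟩⟩ := he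
    · cases v with
      | none => exact absurd rfl huv
      | some j => exact ⟨j, Or.inl rfl⟩
    · cases u with
      | none => exact absurd rfl huv
      | some j => exact ⟨j, Or.inl Sym2.eq_swap⟩
    · exact ⟨i, Or.inr rfl⟩
    · exact ⟨i, Or.inr Sym2.eq_swap⟩

lemma ext_of_subset_edgeSet {A B : Set (Sym2 (Option (ZMod m)))}
    (hA : A ⊆ (wheelGraph m).edgeSet) (hB : B ⊆ (wheelGraph m).edgeSet)
    (hspoke : ∀ i, spokeE m i ∈ A ↔ spokeE m i ∈ B)
    (hrim : ∀ i, rimE m i ∈ A ↔ rimE m i ∈ B) : A = B := by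
  ext e
  by_cases he : e ∈ (wheelGraph m).edgeSet
  · obtain ⟨i, rfl | rfl⟩ := exists_eq_spokeE_or_rimE he
    exacts [hspoke i, hrim i]
  · exact iff_of_false (fun h => he (hA h)) (fun h => he (hB h))

lemma _root_.IsTreeSet.rimE_notMem {T : Set (Sym2 (Option (ZMod m)))}
    (hT : IsTreeSet m T) {i : ZMod m} (h₀ : spokeE m i ∈ T) (h₁ : spokeE m (i + 1) ∈ T) :
    rimE m i ∉ T := by
  intro h
  have hadj : ∀ e ∈ T, ∀ {u v}, e = s(u, v) → (SimpleGraph.fromEdgeSet T).Adj u v := by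
    rintro e he u v rfl
    exact ⟨he, (wheelGraph m).ne_of_adj (hT.1 he)⟩
  refine hT.2.2.cliqueFree le_rfl {none, some i, some (i + 1)} ?_
  rw [SimpleGraph.is3Clique_triple_iff]
  exact ⟨hadj _ h₀ rfl, hadj _ h₁ rfl, hadj _ h rfl⟩

lemma connected_of_adj_center_or_adj_add [NeZero m] {G : SimpleGraph (Option (ZMod m))}
    {S : Set (ZMod m)} (hS : S.Nonempty) {d : ZMod m} (hd : d * d = 1)
    (hspoke : ∀ y ∈ S, G.Adj (some y) none) (hstep : ∀ y ∉ S, G.Adj (some y) (some (y + d))) :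
    G.Connected := by
  have reach : ∀ k : ℕ, ∀ y, y + k * d ∈ S → G.Reachable (some y) none := by
    intro k
    induction k with
    | zero => exact fun y hy => (hspoke y (by simpa using hy)).reachable
    | succ k ih =>
      intro y hy
      by_cases h : y ∈ S
      · exact (hspoke y h).reachable
      · exact (hstep y h).reachable.trans (ih _ (by convert hy using 1; push_cast; ring))
  obtain ⟨s, hs⟩ := hS
  refine (SimpleGraph.connected_iff_exists_forall_reachable _).2 ⟨none, ?_⟩
  rintro (_ | y)
  · rfl
  · refine (reach ((s - y) * d).val y ?_).symm
    rwa [ZMod.natCast_zmod_val, mul_assoc, hd, mul_one, add_sub_cancel]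

variable (m) in
def spokeTree (c : ZMod m) (S : Set (ZMod m)) : Set (Sym2 (Option (ZMod m))) :=
  spokeE m '' S ∪ (fun y => rimE m (y - c)) '' Sᶜ

variable (m) in
def spokeColoring (c : ZMod m) (S : Set (ZMod m)) :
    Set (Sym2 (Option (ZMod m))) × Set (Sym2 (Option (ZMod m))) :=
  (spokeTree m c S, spokeTree m c Sᶜ)

variable {c : ZMod m} {S T : Set (ZMod m)}

@[simp]
lemma spokeE_mem_spokeTree {i : ZMod m} : spokeE m i ∈ spokeTree m c S ↔ i ∈ S := by
  simp [spokeTree]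

lemma rimE_mem_spokeTree (hm : 3 ≤ m) {i : ZMod m} :
    rimE m i ∈ spokeTree m c S ↔ i + c ∉ S := by
  simp [spokeTree, rimE_inj hm, sub_eq_iff_eq_add]

lemma spokeTree_subset_edgeSet (hm : 3 ≤ m) : spokeTree m c S ⊆ (wheelGraph m).edgeSet := by
  rintro _ (⟨i, -, rfl⟩ | ⟨i, -, rfl⟩)
  exacts [spokeE_mem_edgeSet i, rimE_mem_edgeSet hm _]

lemma spokeTree_compl (hm : 3 ≤ m) :
    spokeTree m c Sᶜ = (wheelGraph m).edgeSet \ spokeTree m c S :=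
  ext_of_subset_edgeSet (spokeTree_subset_edgeSet hm) sdiff_subset
    (fun i => by simp [spokeE_mem_edgeSet])
    (fun i => by simp [rimE_mem_spokeTree hm, rimE_mem_edgeSet hm])

lemma ncard_image_spokeE_union_image_rimE (hm : 3 ≤ m) (A B : Set (ZMod m)) :
    (spokeE m '' A ∪ (fun y => rimE m (y - c)) '' B).ncard = A.ncard + B.ncard := by
  have : NeZero m := ⟨by omega⟩
  have hrim : Function.Injective fun y => rimE m (y - c) := fun x y h => by
    simpa using (rimE_inj hm).1 h
  rw [ncard_union_eq, ncard_image_of_injective _ (fun _ _ => spokeE_inj.1),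
    ncard_image_of_injective _ hrim]
  rw [disjoint_left]
  rintro _ ⟨i, -, rfl⟩ ⟨j, -, h⟩
  exact rimE_ne_spokeE _ _ h

lemma ncard_spokeTree (hm : 3 ≤ m) : (spokeTree m c S).ncard = m := by
  have : NeZero m := ⟨by omega⟩
  rw [spokeTree, ncard_image_spokeE_union_image_rimE hm, ncard_add_ncard_compl, Nat.card_zmod]

lemma connected_spokeTree (hm : 3 ≤ m) (hc : c = 0 ∨ c = 1) (hS : S.Nonempty) :
    (SimpleGraph.fromEdgeSet (spokeTree m c S)).Connected := by
  have : NeZero m := ⟨by omega⟩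
  have hadj : ∀ {u v}, s(u, v) ∈ spokeTree m c S →
      (SimpleGraph.fromEdgeSet (spokeTree m c S)).Adj u v := fun h =>
    ⟨h, (wheelGraph m).ne_of_adj (spokeTree_subset_edgeSet hm h)⟩
  -- for `c ∈ {0, 1}` the rim edge `rimE m (y - c)` joins `y` to `y + (1 - 2 * c)`
  refine connected_of_adj_center_or_adj_add hS (d := 1 - 2 * c) ?_ (fun y hy => hadj ?_)
    (fun y hy => hadj ?_)
  · rcases hc with rfl | rfl <;> ring
  · rw [Sym2.eq_swap]
    exact spokeE_mem_spokeTree.2 hy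
  · have hmem := (rimE_mem_spokeTree hm (c := c) (S := S) (i := y - c)).2 (by simpa using hy)
    rcases hc with rfl | rfl
    · simpa [rimE] using hmem
    · convert hmem using 1
      rw [rimE, Sym2.eq_swap]
      congr 2 <;> ring

lemma isTreeSet_spokeTree (hm : 3 ≤ m) (hc : c = 0 ∨ c = 1) (hS : S.Nonempty) :
    IsTreeSet m (spokeTree m c S) := by
  have hconn := connected_spokeTree hm hc hS
  have hedges : (SimpleGraph.fromEdgeSet (spokeTree m c S)).edgeSet = spokeTree m c S := by
    rw [SimpleGraph.edgeSet_fromEdgeSet, sdiff_eq_left, disjoint_left]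
    exact fun e he => (wheelGraph m).not_isDiag_of_mem_edgeSet (spokeTree_subset_edgeSet hm he)
  have htree : (SimpleGraph.fromEdgeSet (spokeTree m c S)).IsTree := by
    have : NeZero m := ⟨by omega⟩
    rw [SimpleGraph.isTree_iff_connected_and_card, hedges, Nat.card_coe_set_eq,
      ncard_spokeTree hm, Finite.card_option, Nat.card_zmod]
    exact ⟨hconn, rfl⟩
  exact ⟨spokeTree_subset_edgeSet hm, hconn, htree.isAcyclic⟩

lemma isWheelColoring_spokeColoring (hm : 3 ≤ m) (hc : c = 0 ∨ c = 1) (hS : S.Nonempty)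
    (hSc : Sᶜ.Nonempty) : IsWheelColoring m (spokeColoring m c S) := by
  refine ⟨isTreeSet_spokeTree hm hc hS, isTreeSet_spokeTree hm hc hSc, ?_, ?_⟩ <;>
    simp only [spokeColoring, spokeTree_compl hm]
  · exact disjoint_sdiff_right
  · exact union_sdiff_cancel (spokeTree_subset_edgeSet hm)

lemma _root_.IsTreeSet.exists_spokeE_mem {T : Set (Sym2 (Option (ZMod m)))} (hT : IsTreeSet m T) :
    ∃ i, spokeE m i ∈ T := by
  obtain ⟨_ | i, h, hne⟩ := hT.2.1.preconnected.exists_adj_of_nontrivial none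
  · exact absurd rfl hne
  · exact ⟨i, h⟩

variable {P : Set (Sym2 (Option (ZMod m))) × Set (Sym2 (Option (ZMod m)))}

lemma _root_.IsWheelColoring.snd_eq (hP : IsWheelColoring m P) :
    P.2 = (wheelGraph m).edgeSet \ P.1 := by
  rw [← hP.2.2.2]
  exact (hP.2.2.1.sup_sdiff_cancel_left).symm

lemma _root_.IsWheelColoring.rimE_mem_iff_of_spokeE_mem_iff (hm : 3 ≤ m) (hP : IsWheelColoring m P)
    {i : ZMod m} (h : spokeE m i ∈ P.1 ↔ spokeE m (i + 1) ∈ P.1) :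
    rimE m i ∈ P.1 ↔ spokeE m i ∉ P.1 := by
  by_cases hi : spokeE m i ∈ P.1
  · simpa [hi] using hP.1.rimE_notMem hi (h.1 hi)
  · have hblue : ∀ e ∈ (wheelGraph m).edgeSet, e ∉ P.1 → e ∈ P.2 := fun e he he₁ => by
      rw [hP.snd_eq]; exact ⟨he, he₁⟩
    have hrim := hP.2.1.rimE_notMem (hblue _ (spokeE_mem_edgeSet i) hi)
      (hblue _ (spokeE_mem_edgeSet _) (mt h.2 hi))
    simpa [hi] using not_imp_comm.1 (hblue _ (rimE_mem_edgeSet hm i)) hrim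

lemma _root_.IsWheelColoring.rimE_mem_iff_of_positiveOrientation (hm : 3 ≤ m)
    (hP : IsWheelColoring m P) (hpos : PositiveOrientation m P) (i : ZMod m) :
    rimE m i ∈ P.1 ↔ spokeE m (i + 1) ∉ P.1 := by
  by_cases hsame : spokeE m i ∈ P.1 ↔ spokeE m (i + 1) ∈ P.1
  · rw [hP.rimE_mem_iff_of_spokeE_mem_iff hm hsame, hsame]
  · rw [(hpos i).resolve_left hsame]
    tauto

lemma _root_.IsWheelColoring.rimE_mem_iff_of_negativeOrientation (hm : 3 ≤ m)
    (hP : IsWheelColoring m P) (hneg : NegativeOrientation m P) (i : ZMod m) :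
    rimE m i ∈ P.1 ↔ spokeE m i ∉ P.1 := by
  by_cases hsame : spokeE m i ∈ P.1 ↔ spokeE m (i + 1) ∈ P.1
  · exact hP.rimE_mem_iff_of_spokeE_mem_iff hm hsame
  · rw [(hneg i).resolve_left hsame]
    tauto

lemma _root_.IsWheelColoring.exists_eq_spokeColoring (hm : 3 ≤ m) (hP : IsWheelColoring m P)
    (hrim : ∀ i, rimE m i ∈ P.1 ↔ spokeE m (i + c) ∉ P.1) :
    ∃ S : Set (ZMod m), S.Nonempty ∧ Sᶜ.Nonempty ∧ P = spokeColoring m c S := by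
  set S := {i | spokeE m i ∈ P.1}
  have hP₁ : P.1 = spokeTree m c S :=
    ext_of_subset_edgeSet hP.1.1 (spokeTree_subset_edgeSet hm) (fun i => by simp [S])
      (fun i => by rw [hrim, rimE_mem_spokeTree hm]; rfl)
  obtain ⟨i, hi⟩ := hP.1.exists_spokeE_mem
  obtain ⟨j, hj⟩ := hP.2.1.exists_spokeE_mem
  refine ⟨S, ⟨i, hi⟩, ⟨j, disjoint_right.1 hP.2.2.1 hj⟩, Prod.ext hP₁ ?_⟩
  rw [hP.snd_eq, hP₁, spokeColoring, spokeTree_compl hm]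

lemma symmDiff_singleton_of_notMem {i : ZMod m} (hi : i ∉ S) : S ∆ {i} = insert i S := by
  rw [(disjoint_singleton_right.2 hi).symmDiff_eq_sup]
  exact union_singleton

lemma symmDiff_singleton_of_mem {i : ZMod m} (hi : i ∈ S) : S ∆ {i} = S \ {i} :=
  symmDiff_of_ge (singleton_subset_iff.2 hi)

lemma exists_flip_mem_symmDiff (hm : 3 ≤ m) (hT : T.Nonempty) (hTc : Tᶜ.Nonempty)
    (hne : S ≠ T) : ∃ i ∈ S ∆ T, (S ∆ {i}).Nonempty ∧ (S ∆ {i})ᶜ.Nonempty := by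
  have hremove : ∀ i ∈ S, i ∉ T → (S \ {i}).Nonempty →
      ∃ i ∈ S ∆ T, (S ∆ {i}).Nonempty ∧ (S ∆ {i})ᶜ.Nonempty := fun i hiS hiT h =>
    ⟨i, Or.inl ⟨hiS, hiT⟩, by rwa [symmDiff_singleton_of_mem hiS], ⟨i, by simp [hiS]⟩⟩
  by_cases hTS : T ⊆ S
  · obtain ⟨i, hiS, hiT⟩ := not_subset.1 fun h => hne (h.antisymm hTS)
    exact hremove i hiS hiT (hT.mono fun x hx => ⟨hTS hx, fun h => hiT (h ▸ hx)⟩)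
  obtain ⟨j, hjT, hjS⟩ := not_subset.1 hTS
  by_cases hfull : (insert j S)ᶜ.Nonempty
  · refine ⟨j, Or.inr ⟨hjT, hjS⟩, ?_⟩
    rw [symmDiff_singleton_of_notMem hjS]
    exact ⟨insert_nonempty j S, hfull⟩
  have hjS' : ∀ x ≠ j, x ∈ S := fun x hx => by
    have := (compl_empty_iff.1 (not_nonempty_iff_eq_empty.1 hfull)).symm ▸ mem_univ x
    exact (mem_insert_iff.1 this).resolve_left hx
  obtain ⟨k, hkT⟩ := hTc
  have hkj : k ≠ j := fun h => hkT (h ▸ hjT)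
  have : NeZero m := ⟨by omega⟩
  obtain ⟨x, -, hx⟩ := exists_mem_notMem_of_ncard_lt_ncard (s := {j, k}) (t := univ) <| by
    rw [ncard_univ, Nat.card_zmod, ncard_pair hkj.symm]
    omega
  simp only [mem_insert_iff, mem_singleton_iff, not_or] at hx
  exact hremove k (hjS' k hkj) hkT ⟨x, hjS' x hx.1, hx.2⟩

lemma insert_spokeTree_diff_subset_edgeSet (hm : 3 ≤ m) {e f : Sym2 (Option (ZMod m))}
    (hf : f ∈ (wheelGraph m).edgeSet) : insert f (spokeTree m c S \ {e}) ⊆ (wheelGraph m).edgeSet :=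
  insert_subset hf (sdiff_subset.trans (spokeTree_subset_edgeSet hm))

lemma exists_exchange_symmDiff_singleton (hm : 3 ≤ m) {i : ZMod m} (hi : i ∈ S ∆ T) :
    ∃ e f, e ∈ spokeTree m c S ∩ spokeTree m c Tᶜ ∧ f ∈ spokeTree m c Sᶜ ∩ spokeTree m c T ∧
      spokeTree m c (S ∆ {i}) = insert f (spokeTree m c S \ {e}) ∧
      spokeTree m c (S ∆ {i})ᶜ = insert e (spokeTree m c Sᶜ \ {f}) := by
  rcases hi with ⟨hiS, hiT⟩ | ⟨hiT, hiS⟩ <;> [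
    refine ⟨spokeE m i, rimE m (i - c), by simp [hiS, hiT],
      by simp [rimE_mem_spokeTree hm, hiS, hiT], ?_, ?_⟩;
    refine ⟨rimE m (i - c), spokeE m i, by simp [rimE_mem_spokeTree hm, hiS, hiT],
      by simp [hiS, hiT], ?_, ?_⟩]
  all_goals
    refine ext_of_subset_edgeSet (spokeTree_subset_edgeSet hm)
      (insert_spokeTree_diff_subset_edgeSet hm ?_) (fun j => ?_) (fun j => ?_)
  all_goals first
    | exact spokeE_mem_edgeSet _
    | exact rimE_mem_edgeSet hm _
    | simp [mem_symmDiff, rimE_mem_spokeTree hm, rimE_inj hm, eq_sub_iff_add_eq]; grind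

lemma spokeTree_inter (hm : 3 ≤ m) : spokeTree m c S ∩ spokeTree m c T =
    spokeE m '' (S ∩ T) ∪ (fun y => rimE m (y - c)) '' (Sᶜ ∩ Tᶜ) := by
  ext e
  simp only [spokeTree, mem_inter_iff, mem_union, mem_image, mem_compl_iff]
  constructor
  · rintro ⟨⟨x, hx, rfl⟩ | ⟨x, hx, rfl⟩, ⟨y, hy, h⟩ | ⟨y, hy, h⟩⟩ <;> simp_all [rimE_inj hm]
  · rintro (⟨x, hx, rfl⟩ | ⟨x, hx, rfl⟩)
    exacts [⟨Or.inl ⟨x, hx.1, rfl⟩, Or.inl ⟨x, hx.2, rfl⟩⟩,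
      ⟨Or.inr ⟨x, hx.1, rfl⟩, Or.inr ⟨x, hx.2, rfl⟩⟩]

lemma ncard_spokeTree_inter_add_ncard_symmDiff (hm : 3 ≤ m) :
    (spokeTree m c S ∩ spokeTree m c T).ncard + (S ∆ T).ncard = m := by
  have : NeZero m := ⟨by omega⟩
  have hdisj : Disjoint (S ∩ T) (Sᶜ ∩ Tᶜ) := disjoint_left.2 fun x hx hx' => hx'.1 hx.1
  have hcompl := ncard_add_ncard_compl (S ∆ T)
  rw [Nat.card_zmod, compl_symmDiff, bihimp_eq'] at hcompl
  rw [spokeTree_inter hm, ncard_image_spokeE_union_image_rimE hm, ← ncard_union_eq hdisj,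
    add_comm]
  exact hcompl

lemma exists_strictlyMonotone_exchanges (hm : 3 ≤ m) (hc : c = 0 ∨ c = 1) (hT : T.Nonempty)
    (hTc : Tᶜ.Nonempty) (hS : S.Nonempty) (hSc : Sᶜ.Nonempty) :
    ∃ L, WExchSeq m (spokeColoring m c S) L (spokeColoring m c T) ∧
      L.length = (S ∆ T).ncard ∧
      IsStrictlyMonotone (spokeColoring m c S) (spokeColoring m c T) L := by
  have : NeZero m := ⟨by omega⟩
  induction hn : (S ∆ T).ncard generalizing S with
  | zero =>
    obtain rfl : S = T := by rwa [ncard_eq_zero, ← bot_eq_empty, symmDiff_eq_bot] at hn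
    exact ⟨[], rfl, rfl, by simp [IsStrictlyMonotone]⟩
  | succ n ih =>
    have hne : S ≠ T := by
      rintro rfl
      simp at hn
    obtain ⟨i, hi, hS', hS'c⟩ := exists_flip_mem_symmDiff hm hT hTc hne
    obtain ⟨e, f, he, hf, h₁, h₂⟩ := exists_exchange_symmDiff_singleton hm (c := c) hi
    have hn' : (S ∆ {i} ∆ T).ncard = n := by
      rw [symmDiff_right_comm, symmDiff_singleton_of_mem hi,
        ncard_sdiff_singleton_of_mem hi, hn, Nat.add_sub_cancel]
    obtain ⟨L, hL, hlen, hmono⟩ := ih hS' hS'c hn'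
    refine ⟨(e, f) :: L, ⟨_, he.1, hf.1, h₁, h₂, isWheelColoring_spokeColoring hm hc hS' hS'c, hL⟩,
      by simp [hlen], hmono.cons ?_ he hf h₁ h₂⟩
    exact (isWheelColoring_spokeColoring hm hc hT hTc).2.2.1

end Wheel

/-- If two colorings `P₁ = (R₁, B₁)` and `P₂ = (R₂, B₂)` of a wheel on `n = m + 1`
vertices have the same orientation, then there is a strictly monotone sequence of
symmetric exchanges transforming `P₁` into `P₂` (each exchange takes its red element from
`R₁ ∩ B₂` and its blue element from `B₁ ∩ R₂`, and no edge is used twice), of length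
exactly `(n - 1) - |R₁ ∩ R₂| = m - |R₁ ∩ R₂|`. -/
theorem stmt8 (m : ℕ) (hm : 3 ≤ m)
    (P₁ P₂ : Set (Sym2 (Option (ZMod m))) × Set (Sym2 (Option (ZMod m))))
    (h₁ : IsWheelColoring m P₁) (h₂ : IsWheelColoring m P₂)
    (hor : SameOrientation m P₁ P₂) :
    ∃ L, WExchSeq m P₁ L P₂ ∧
      L.length = m - (P₁.1 ∩ P₂.1).ncard ∧
      (∀ p ∈ L, p.1 ∈ P₁.1 ∩ P₂.2 ∧ p.2 ∈ P₁.2 ∩ P₂.1) ∧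
      (L.map Prod.fst ++ L.map Prod.snd).Nodup := by
  obtain ⟨c, hc, hrim₁, hrim₂⟩ : ∃ c : ZMod m, (c = 0 ∨ c = 1) ∧
      (∀ i, rimE m i ∈ P₁.1 ↔ spokeE m (i + c) ∉ P₁.1) ∧
      (∀ i, rimE m i ∈ P₂.1 ↔ spokeE m (i + c) ∉ P₂.1) := by
    rcases hor with ⟨hpos₁, hpos₂⟩ | ⟨hneg₁, hneg₂⟩
    · exact ⟨1, Or.inr rfl, h₁.rimE_mem_iff_of_positiveOrientation hm hpos₁,
        h₂.rimE_mem_iff_of_positiveOrientation hm hpos₂⟩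
    · refine ⟨0, Or.inl rfl, fun i => ?_, fun i => ?_⟩ <;> rw [add_zero]
      exacts [h₁.rimE_mem_iff_of_negativeOrientation hm hneg₁ i,
        h₂.rimE_mem_iff_of_negativeOrientation hm hneg₂ i]
  obtain ⟨S₁, hS₁, hS₁c, rfl⟩ := h₁.exists_eq_spokeColoring hm hrim₁
  obtain ⟨S₂, hS₂, hS₂c, rfl⟩ := h₂.exists_eq_spokeColoring hm hrim₂
  obtain ⟨L, hL, hlen, hmono⟩ := Wheel.exists_strictlyMonotone_exchanges hm hc hS₂ hS₂c hS₁ hS₁c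
  refine ⟨L, hL, ?_, hmono⟩
  have := Wheel.ncard_spokeTree_inter_add_ncard_symmDiff hm (c := c) (S := S₁) (T := S₂)
  simp only [Wheel.spokeColoring]
  omega
end

section
/- Let G be a wheel graph and let (R,B) be a coloring of G with positive orientation. If e is a spoke, then exchanging e with the rim edge φ₋(e) (the rim edge incident to e in the direction opposite to the orientation) is a feasible symmetric exchange, i.e., R △ {e, φ₋(e)} and B △ {e, φ₋(e)} are both spanning trees, provided the exchange does not make one color class contain all spokes. -/
open Set symmDiff

section lemmas
variable {m : ℕ}

lemma wz_one_ne_zero (hm : 3 ≤ m) : (1 : ZMod m) ≠ 0 := by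
  haveI : NeZero m := ⟨by omega⟩
  intro h
  have := (ZMod.natCast_eq_zero_iff 1 m).1 (by exact_mod_cast h)
  have := Nat.le_of_dvd one_pos this
  omega

lemma wz_two_ne_zero (hm : 3 ≤ m) : (2 : ZMod m) ≠ 0 := by
  haveI : NeZero m := ⟨by omega⟩
  intro h
  have := (ZMod.natCast_eq_zero_iff 2 m).1 (by exact_mod_cast h)
  have := Nat.le_of_dvd two_pos this
  omega

lemma ne_add_one (hm : 3 ≤ m) (j : ZMod m) : j ≠ j + 1 := by
  intro h
  exact wz_one_ne_zero hm (by linear_combination -h)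

lemma spoke_ne_rim (j k : ZMod m) : spokeE m j ≠ rimE m k := by
  simp [spokeE, rimE, Sym2.eq_iff]

lemma spoke_inj {j k : ZMod m} : spokeE m j = spokeE m k ↔ j = k := by
  simp [spokeE, Sym2.eq_iff]

lemma rim_inj (hm : 3 ≤ m) {j k : ZMod m} : rimE m j = rimE m k ↔ j = k := by
  constructor
  · intro h
    rw [rimE, rimE, Sym2.eq_iff] at h
    rcases h with ⟨h, -⟩ | ⟨h1, h2⟩
    · simpa using h
    · exfalso
      have h1' : j = k + 1 := by simpa using h1
      have h2' : j + 1 = k := by simpa using h2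
      exact wz_two_ne_zero hm (by linear_combination h2' - h1')
  · rintro rfl; rfl

lemma spoke_mem_edgeSet (j : ZMod m) : spokeE m j ∈ (wheelGraph m).edgeSet := by
  show (wheelGraph m).Adj none (some j)
  unfold wheelGraph
  exact ⟨by simp, Or.inl rfl⟩

lemma rim_mem_edgeSet (hm : 3 ≤ m) (j : ZMod m) : rimE m j ∈ (wheelGraph m).edgeSet := by
  show (wheelGraph m).Adj (some j) (some (j + 1))
  unfold wheelGraph
  exact ⟨by simp [ne_add_one hm j], Or.inr (Or.inr ⟨j, Or.inl ⟨rfl, rfl⟩⟩)⟩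

lemma edge_class {e : Sym2 (Option (ZMod m))} (he : e ∈ (wheelGraph m).edgeSet) :
    (∃ j, e = spokeE m j) ∨ ∃ j, e = rimE m j := by
  induction e with
  | _ u v =>
    unfold wheelGraph at he
    obtain ⟨hne, h⟩ := he
    rcases h with rfl | rfl | ⟨i, ⟨rfl, rfl⟩ | ⟨rfl, rfl⟩⟩
    · match v with
      | none => exact absurd rfl hne
      | some x => exact Or.inl ⟨x, rfl⟩
    · match u with
      | none => exact absurd rfl hne
      | some x => exact Or.inl ⟨x, Sym2.eq_swap⟩
    · exact Or.inr ⟨i, rfl⟩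
    · exact Or.inr ⟨i, Sym2.eq_swap⟩

end lemmas

def canon (m : ℕ) (S : Set (ZMod m)) : Set (Sym2 (Option (ZMod m))) :=
  {e | ∃ j, (e = spokeE m j ∧ j ∈ S) ∨ (e = rimE m j ∧ j + 1 ∉ S)}

section canon
variable {m : ℕ} {S : Set (ZMod m)}

lemma spoke_mem_canon (hm : 3 ≤ m) {j : ZMod m} : spokeE m j ∈ canon m S ↔ j ∈ S := by
  constructor
  · rintro ⟨k, ⟨hk, hS⟩ | ⟨hk, -⟩⟩
    · rwa [spoke_inj.1 hk]
    · exact absurd hk (spoke_ne_rim j k)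
  · intro h; exact ⟨j, Or.inl ⟨rfl, h⟩⟩

lemma rim_mem_canon (hm : 3 ≤ m) {j : ZMod m} : rimE m j ∈ canon m S ↔ j + 1 ∉ S := by
  constructor
  · rintro ⟨k, ⟨hk, -⟩ | ⟨hk, hS⟩⟩
    · exact absurd hk.symm (spoke_ne_rim k j)
    · rwa [rim_inj hm |>.1 hk]
  · intro h; exact ⟨j, Or.inr ⟨rfl, h⟩⟩

lemma canon_subset (hm : 3 ≤ m) : canon m S ⊆ (wheelGraph m).edgeSet := by
  rintro e ⟨j, ⟨rfl, -⟩ | ⟨rfl, -⟩⟩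
  · exact spoke_mem_edgeSet j
  · exact rim_mem_edgeSet hm j

lemma eq_canon (hm : 3 ≤ m) {T : Set (Sym2 (Option (ZMod m)))}
    (hsub : T ⊆ (wheelGraph m).edgeSet)
    (hs : ∀ j, spokeE m j ∈ T ↔ j ∈ S) (hr : ∀ j, rimE m j ∈ T ↔ j + 1 ∉ S) :
    T = canon m S := by
  ext e
  constructor
  · intro he
    rcases edge_class (hsub he) with ⟨j, rfl⟩ | ⟨j, rfl⟩
    · exact (spoke_mem_canon hm).2 ((hs j).1 he)
    · exact (rim_mem_canon hm).2 ((hr j).1 he)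
  · rintro ⟨j, ⟨rfl, hj⟩ | ⟨rfl, hj⟩⟩
    · exact (hs j).2 hj
    · exact (hr j).2 hj

lemma canon_disjoint (hm : 3 ≤ m) : Disjoint (canon m S) (canon m Sᶜ) := by
  rw [Set.disjoint_left]
  intro e he he'
  rcases edge_class (canon_subset hm he) with ⟨j, rfl⟩ | ⟨j, rfl⟩
  · exact (spoke_mem_canon hm).1 he' ((spoke_mem_canon hm).1 he)
  · exact (rim_mem_canon hm).1 he (by simpa using (rim_mem_canon (S := Sᶜ) hm).1 he')

lemma canon_union (hm : 3 ≤ m) : canon m S ∪ canon m Sᶜ = (wheelGraph m).edgeSet := by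
  apply Set.Subset.antisymm (Set.union_subset (canon_subset hm) (canon_subset hm))
  intro e he
  rcases edge_class he with ⟨j, rfl⟩ | ⟨j, rfl⟩
  · by_cases h : j ∈ S
    · exact Or.inl ((spoke_mem_canon hm).2 h)
    · exact Or.inr ((spoke_mem_canon hm).2 h)
  · by_cases h : j + 1 ∈ S
    · exact Or.inr ((rim_mem_canon hm).2 (by simpa using h))
    · exact Or.inl ((rim_mem_canon hm).2 h)

lemma canon_connected (hm : 3 ≤ m) (hS : S.Nonempty) :
    (SimpleGraph.fromEdgeSet (canon m S)).Connected := by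
  haveI : NeZero m := ⟨by omega⟩
  set G := SimpleGraph.fromEdgeSet (canon m S) with hG
  have hspoke : ∀ j ∈ S, G.Adj none (some j) := fun j hj =>
    (SimpleGraph.fromEdgeSet_adj _).2 ⟨(spoke_mem_canon hm).2 hj, by simp⟩
  have hrim : ∀ j : ZMod m, j ∉ S → G.Adj (some (j - 1)) (some j) := by
    intro j hj
    refine (SimpleGraph.fromEdgeSet_adj _).2 ⟨?_, by simp only [ne_eq, Option.some.injEq]; intro h; exact wz_one_ne_zero hm (by linear_combination -h)⟩
    have : rimE m (j - 1) ∈ canon m S := (rim_mem_canon hm).2 (by rwa [sub_add_cancel])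
    simpa [rimE, sub_add_cancel] using this
  have key : ∀ (k : ℕ) (v : ZMod m), v - k ∈ S → G.Reachable none (some v) := by
    intro k
    induction k with
    | zero => intro v hv; simp only [Nat.cast_zero, sub_zero] at hv; exact (hspoke v hv).reachable
    | succ k ih =>
      intro v hv
      by_cases h : v ∈ S
      · exact (hspoke v h).reachable
      · refine (ih (v - 1) ?_).trans (hrim v h).reachable
        have : v - ((k:ℕ)+1 : ℕ) = v - 1 - (k:ℕ) := by push_cast; ring
        rwa [this] at hv
  have key2 : ∀ v : ZMod m, G.Reachable none (some v) := by
    intro v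
    obtain ⟨s, hs⟩ := hS
    refine key ((v - s).val) v ?_
    rwa [ZMod.natCast_val, ZMod.cast_id, sub_sub_cancel]
  constructor
  intro u v
  match u, v with
  | none, none => rfl
  | none, some v => exact key2 v
  | some u, none => exact (key2 u).symm
  | some u, some v => exact (key2 u).symm.trans (key2 v)

end canon

section generic
open SimpleGraph
variable {V : Type*} [Fintype V]

lemma conn_del (G : SimpleGraph V) (hG : G.Connected) (h : ¬ G.IsAcyclic) :
    ∃ e ∈ G.edgeSet, (G \ SimpleGraph.fromEdgeSet {e}).Connected := by
  rw [IsAcyclic] at h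
  push_neg at h
  obtain ⟨v, c, hc⟩ := h
  cases c with
  | nil => exact absurd rfl hc.ne_nil
  | @cons _ b _ hadj p =>
    refine ⟨s(v, b), hadj, ?_⟩
    have hreach : (G \ fromEdgeSet {s(v, b)}).Reachable v b :=
      (adj_and_reachable_delete_edges_iff_exists_cycle.2
        ⟨v, Walk.cons hadj p, hc, by simp⟩).2
    have key : ∀ a c : V, G.Adj a c → (G \ fromEdgeSet {s(v, b)}).Reachable a c := by
      intro a c hac
      by_cases h : s(a, c) = s(v, b)
      · rw [Sym2.eq_iff] at h
        rcases h with ⟨rfl, rfl⟩ | ⟨rfl, rfl⟩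
        · exact hreach
        · exact hreach.symm
      · exact Adj.reachable (by simp [sdiff_adj, hac, h, fromEdgeSet_adj])
    have tr : ∀ ⦃a c : V⦄, G.Walk a c → (G \ fromEdgeSet {s(v, b)}).Reachable a c := by
      intro a c p
      induction p with
      | nil => exact Reachable.refl _
      | cons h p ih => exact (key _ _ h).trans ih
    have := hG.nonempty
    exact ⟨fun a c => tr (hG a c).some⟩

lemma conn_card_lb : ∀ (n : ℕ) (G : SimpleGraph V), G.edgeSet.ncard = n → G.Connected →
    Fintype.card V ≤ n + 1 := by
  intro n
  induction n using Nat.strong_induction_on with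
  | _ n ih =>
    intro G hn hG
    by_cases hA : G.IsAcyclic
    · have hT : G.IsTree := ⟨hG, hA⟩
      classical
      haveI : Fintype G.edgeSet := Fintype.ofFinite _
      have := hT.card_edgeFinset
      have hc : G.edgeFinset.card = G.edgeSet.ncard := by
        rw [SimpleGraph.edgeFinset, ← Set.ncard_eq_toFinset_card']
      omega
    · obtain ⟨e, he, hconn⟩ := conn_del G hG hA
      have hes : (G \ fromEdgeSet {e}).edgeSet = G.edgeSet \ {e} := by
        rw [edgeSet_sdiff, edgeSet_fromEdgeSet, edgeSet_sdiff_sdiff_isDiag]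
      have hfin : G.edgeSet.Finite := Set.toFinite _
      have hpos : 1 ≤ n := by
        rw [← hn]
        exact (Set.ncard_pos hfin).2 ⟨e, he⟩
      have hcard : (G \ fromEdgeSet {e}).edgeSet.ncard = n - 1 := by
        rw [hes, Set.ncard_diff_singleton_of_mem he, hn]
      have := ih (n - 1) (by omega) _ hcard hconn
      omega

lemma acyclic_of_conn_card (G : SimpleGraph V) (hG : G.Connected)
    (hcard : G.edgeSet.ncard + 1 = Fintype.card V) : G.IsAcyclic := by
  by_contra hA
  obtain ⟨e, he, hconn⟩ := conn_del G hG hA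
  have hes : (G \ fromEdgeSet {e}).edgeSet = G.edgeSet \ {e} := by
    rw [edgeSet_sdiff, edgeSet_fromEdgeSet, edgeSet_sdiff_sdiff_isDiag]
  have hfin : G.edgeSet.Finite := Set.toFinite _
  have hpos : 1 ≤ G.edgeSet.ncard := (Set.ncard_pos hfin).2 ⟨e, he⟩
  have hcard' : (G \ fromEdgeSet {e}).edgeSet.ncard = G.edgeSet.ncard - 1 := by
    rw [hes, Set.ncard_diff_singleton_of_mem he]
  have := conn_card_lb _ _ hcard' hconn
  omega

end generic

section canon2
variable {m : ℕ} {S : Set (ZMod m)}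

lemma canon_ncard (hm : 3 ≤ m) : (canon m S).ncard = m := by
  haveI : NeZero m := ⟨by omega⟩
  have heq : canon m S = (spokeE m '' S) ∪ (rimE m '' {j | j + 1 ∉ S}) := by
    ext e
    constructor
    · rintro ⟨j, ⟨rfl, hj⟩ | ⟨rfl, hj⟩⟩
      · exact Or.inl ⟨j, hj, rfl⟩
      · exact Or.inr ⟨j, hj, rfl⟩
    · rintro (⟨j, hj, rfl⟩ | ⟨j, hj, rfl⟩)
      · exact ⟨j, Or.inl ⟨rfl, hj⟩⟩
      · exact ⟨j, Or.inr ⟨rfl, hj⟩⟩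
  have hdisj : Disjoint (spokeE m '' S) (rimE m '' {j | j + 1 ∉ S}) := by
    rw [Set.disjoint_left]
    rintro e ⟨j, -, rfl⟩ ⟨k, -, hk⟩
    exact spoke_ne_rim j k hk.symm
  have h1 : (spokeE m '' S).ncard = S.ncard :=
    Set.ncard_image_of_injective _ (fun a b h => spoke_inj.1 h)
  have h2 : (rimE m '' {j | j + 1 ∉ S}).ncard = Sᶜ.ncard := by
    rw [Set.ncard_image_of_injective _ (fun a b h => (rim_inj hm).1 h)]
    have : {j : ZMod m | j + 1 ∉ S} = (fun x => x - 1) '' Sᶜ := by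
      ext j
      constructor
      · intro hj; exact ⟨j + 1, hj, by ring⟩
      · rintro ⟨x, hx, rfl⟩; simpa [sub_add_cancel] using hx
    rw [this, Set.ncard_image_of_injective _ sub_left_injective]
  rw [heq, Set.ncard_union_eq hdisj (Set.toFinite _) (Set.toFinite _), h1, h2,
    Set.ncard_add_ncard_compl, Nat.card_eq_fintype_card, ZMod.card]

lemma canon_acyclic (hm : 3 ≤ m) (hS : S.Nonempty) :
    (SimpleGraph.fromEdgeSet (canon m S)).IsAcyclic := by
  haveI : NeZero m := ⟨by omega⟩
  apply acyclic_of_conn_card _ (canon_connected hm hS)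
  have hes : (SimpleGraph.fromEdgeSet (canon m S)).edgeSet = canon m S := by
    rw [SimpleGraph.edgeSet_fromEdgeSet]
    rw [sdiff_eq_left]
    rw [Set.disjoint_left]
    rintro e ⟨j, ⟨rfl, -⟩ | ⟨rfl, -⟩⟩ hd
    · simpa [spokeE] using hd
    · have : j = j + 1 := by simpa [rimE] using hd
      exact ne_add_one hm j this
  rw [hes, canon_ncard hm, Fintype.card_option, ZMod.card]

lemma canon_isTreeSet (hm : 3 ≤ m) (hS : S.Nonempty) : IsTreeSet m (canon m S) :=
  ⟨canon_subset hm, canon_connected hm hS, canon_acyclic hm hS⟩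

end canon2

section main
variable {m : ℕ}

lemma canon_coloring (hm : 3 ≤ m) {S : Set (ZMod m)} (hS : S.Nonempty) (hS' : Sᶜ.Nonempty) :
    IsWheelColoring m (canon m S, canon m Sᶜ) :=
  ⟨canon_isTreeSet hm hS, canon_isTreeSet hm hS', canon_disjoint hm, canon_union hm⟩

lemma no_triangle (hm : 3 ≤ m) {T : Set (Sym2 (Option (ZMod m)))} (hT : IsTreeSet m T)
    (j : ZMod m) (h1 : spokeE m j ∈ T) (h2 : rimE m j ∈ T) (h3 : spokeE m (j + 1) ∈ T) :
    False := by
  set G := SimpleGraph.fromEdgeSet T with hG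
  have hne1 : (none : Option (ZMod m)) ≠ some j := by simp
  have hne2 : (some j : Option (ZMod m)) ≠ some (j + 1) := by
    simpa using ne_add_one hm j
  have hne3 : (some (j + 1) : Option (ZMod m)) ≠ none := by simp
  have a1 : G.Adj none (some j) := (SimpleGraph.fromEdgeSet_adj _).2 ⟨h1, hne1⟩
  have a2 : G.Adj (some j) (some (j + 1)) := (SimpleGraph.fromEdgeSet_adj _).2 ⟨h2, hne2⟩
  have a3 : G.Adj (some (j + 1)) none := (SimpleGraph.fromEdgeSet_adj _).2 ⟨by
    have : s((none : Option (ZMod m)), some (j+1)) ∈ T := h3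
    rwa [Sym2.eq_swap] at this, hne3⟩
  let c : G.Walk none none :=
    SimpleGraph.Walk.cons a1 (SimpleGraph.Walk.cons a2 (SimpleGraph.Walk.cons a3 SimpleGraph.Walk.nil))
  have hc : c.IsCycle := by
    rw [SimpleGraph.Walk.isCycle_def]
    refine ⟨?_, by simp [c], ?_⟩
    · rw [SimpleGraph.Walk.isTrail_def]
      simp only [c, SimpleGraph.Walk.edges_cons, SimpleGraph.Walk.edges_nil]
      simp [Sym2.eq_iff, hne1, hne2, hne3, ne_add_one hm j]
    · simp only [c, SimpleGraph.Walk.support_cons, SimpleGraph.Walk.support_nil, List.tail_cons]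
      simp [ne_add_one hm j]
  exact hT.2.2 c hc
end main

section final
variable {m : ℕ}

lemma mem2_iff {P : Set (Sym2 (Option (ZMod m))) × Set (Sym2 (Option (ZMod m)))}
    (hP : IsWheelColoring m P) (x : Sym2 (Option (ZMod m))) :
    x ∈ P.2 ↔ x ∈ (wheelGraph m).edgeSet ∧ x ∉ P.1 := by
  obtain ⟨-, -, hdisj, huni⟩ := hP
  constructor
  · intro h
    exact ⟨huni ▸ Or.inr h, fun h1 => Set.disjoint_left.1 hdisj h1 h⟩
  · rintro ⟨he, h1⟩
    rw [← huni] at he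
    exact he.resolve_left h1

lemma rim_iff (hm : 3 ≤ m) {P : Set (Sym2 (Option (ZMod m))) × Set (Sym2 (Option (ZMod m)))}
    (hP : IsWheelColoring m P) (hpos : PositiveOrientation m P) (j : ZMod m) :
    rimE m j ∈ P.1 ↔ spokeE m (j + 1) ∉ P.1 := by
  by_cases h1 : spokeE m j ∈ P.1 <;> by_cases h2 : spokeE m (j + 1) ∈ P.1
  · exact iff_of_false (fun hr => no_triangle hm hP.1 j h1 hr h2) (by simpa using h2)
  · refine iff_of_true ?_ h2
    rcases hpos j with h | h
    · exact absurd (h.1 h1) h2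
    · exact h.2 h1
  · refine iff_of_false ?_ (by simpa using h2)
    rcases hpos j with h | h
    · exact absurd (h.2 h2) h1
    · exact fun hr => h1 (h.1 hr)
  · refine iff_of_true ?_ h2
    by_contra hr
    have hr2 : rimE m j ∈ P.2 := (mem2_iff hP _).2 ⟨rim_mem_edgeSet hm j, hr⟩
    have hs1 : spokeE m j ∈ P.2 := (mem2_iff hP _).2 ⟨spoke_mem_edgeSet j, h1⟩
    have hs2 : spokeE m (j + 1) ∈ P.2 := (mem2_iff hP _).2 ⟨spoke_mem_edgeSet (j + 1), h2⟩
    exact no_triangle hm hP.2.1 j hs1 hr2 hs2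

open symmDiff in
theorem stmt9' (hm : 3 ≤ m)
    (P : Set (Sym2 (Option (ZMod m))) × Set (Sym2 (Option (ZMod m))))
    (hP : IsWheelColoring m P) (hpos : PositiveOrientation m P) (i : ZMod m)
    (hnotall : ∃ j : ZMod m, j ≠ i ∧ (spokeE m j ∈ P.1 ↔ spokeE m i ∈ P.1)) :
    IsWheelColoring m
      (P.1 ∆ {spokeE m i, rimE m (i - 1)}, P.2 ∆ {spokeE m i, rimE m (i - 1)}) := by
  classical
  set S : Set (ZMod m) := {j | spokeE m j ∈ P.1} with hS
  have hs1 : ∀ j, spokeE m j ∈ P.1 ↔ j ∈ S := fun j => Iff.rfl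
  have hr1 : ∀ j, rimE m j ∈ P.1 ↔ j + 1 ∉ S := fun j => rim_iff hm hP hpos j
  have hs2 : ∀ j, spokeE m j ∈ P.2 ↔ j ∉ S := fun j => by
    rw [mem2_iff hP]
    simp [spoke_mem_edgeSet j, hs1]
  have hr2 : ∀ j, rimE m j ∈ P.2 ↔ j + 1 ∈ S := fun j => by
    rw [mem2_iff hP]
    simp only [rim_mem_edgeSet hm j, true_and, hr1 j]
    tauto
  set pr : Set (Sym2 (Option (ZMod m))) := {spokeE m i, rimE m (i - 1)} with hpr
  have hprsub : pr ⊆ (wheelGraph m).edgeSet := by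
    rintro x (rfl | rfl)
    · exact spoke_mem_edgeSet i
    · exact rim_mem_edgeSet hm (i - 1)
  have hpair_s : ∀ j, spokeE m j ∈ pr ↔ j = i := by
    intro j
    simp only [hpr, Set.mem_insert_iff, Set.mem_singleton_iff, spoke_inj]
    simp [spoke_ne_rim]
  have hpair_r : ∀ j, rimE m j ∈ pr ↔ j = i - 1 := by
    intro j
    simp only [hpr, Set.mem_insert_iff, Set.mem_singleton_iff, rim_inj hm]
    have : rimE m j ≠ spokeE m i := fun h => spoke_ne_rim i j h.symm
    simp [this]
  have hsub : ∀ j : ZMod m, j = i - 1 ↔ j + 1 = i := by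
    intro j
    constructor
    · rintro rfl; exact sub_add_cancel i 1
    · rintro rfl; ring
  have hA : P.1 ∆ pr = canon m (S ∆ {i}) := by
    apply eq_canon hm
    · exact (Set.symmDiff_subset_union).trans (Set.union_subset hP.1.1 hprsub)
    · intro j
      rw [Set.mem_symmDiff, Set.mem_symmDiff, hpair_s j, hs1 j, Set.mem_singleton_iff]
      try tauto
    · intro j
      rw [Set.mem_symmDiff, Set.mem_symmDiff, hpair_r j, hr1 j, Set.mem_singleton_iff, hsub j]
      by_cases h : j + 1 = i <;> by_cases h' : j + 1 ∈ S <;> simp [h, h'] <;> tauto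
  have hB : P.2 ∆ pr = canon m ((S ∆ {i})ᶜ) := by
    apply eq_canon hm
    · exact (Set.symmDiff_subset_union).trans (Set.union_subset hP.2.1.1 hprsub)
    · intro j
      rw [Set.mem_symmDiff, Set.mem_compl_iff, Set.mem_symmDiff, hpair_s j, hs2 j,
        Set.mem_singleton_iff]
      try tauto
    · intro j
      rw [Set.mem_symmDiff, Set.mem_compl_iff, Set.mem_symmDiff, hpair_r j, hr2 j,
        Set.mem_singleton_iff, hsub j]
      by_cases h : j + 1 = i <;> by_cases h' : j + 1 ∈ S <;> simp [h, h'] <;> tauto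
  obtain ⟨j, hj, hjiff⟩ := hnotall
  have hne1 : (S ∆ {i}).Nonempty := by
    by_cases hi : i ∈ S
    · exact ⟨j, Set.mem_symmDiff.2 (Or.inl ⟨(hs1 j).1 (hjiff.2 ((hs1 i).2 hi)), by simp [hj]⟩)⟩
    · exact ⟨i, Set.mem_symmDiff.2 (Or.inr ⟨rfl, hi⟩)⟩
  have hne2 : ((S ∆ {i})ᶜ).Nonempty := by
    by_cases hi : i ∈ S
    · refine ⟨i, ?_⟩
      rw [Set.mem_compl_iff, Set.mem_symmDiff]
      simp [hi]
    · refine ⟨j, ?_⟩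
      have hjS : j ∉ S := fun h => hi ((hs1 i).1 (hjiff.1 ((hs1 j).2 h)))
      rw [Set.mem_compl_iff, Set.mem_symmDiff]
      simp [hj, hjS]
  rw [show (P.1 ∆ {spokeE m i, rimE m (i - 1)}, P.2 ∆ {spokeE m i, rimE m (i - 1)}) =
    (canon m (S ∆ {i}), canon m ((S ∆ {i})ᶜ)) from Prod.ext hA hB]
  exact canon_coloring hm hne1 hne2

end final

/-- Let `(R, B)` be a coloring of the wheel with positive orientation and let `e` be the
spoke at position `i`. Then swapping the colors of `e` and of the rim edge
`φ₋(e) = rimE m (i - 1)` (the rim edge incident to `e` in the direction opposite to the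
orientation) is a feasible symmetric exchange, i.e. both symmetric differences are again
the color classes of a coloring — provided the exchange does not make one color class
contain all the spokes (i.e. some other spoke has the same color as `e`). -/
theorem stmt9 (m : ℕ) (hm : 3 ≤ m)
    (P : Set (Sym2 (Option (ZMod m))) × Set (Sym2 (Option (ZMod m))))
    (hP : IsWheelColoring m P) (hpos : PositiveOrientation m P) (i : ZMod m)
    (hnotall : ∃ j : ZMod m, j ≠ i ∧ (spokeE m j ∈ P.1 ↔ spokeE m i ∈ P.1)) :
    IsWheelColoring m
      (P.1 ∆ {spokeE m i, rimE m (i - 1)}, P.2 ∆ {spokeE m i, rimE m (i - 1)}) :=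
  stmt9' hm P hP hpos i hnotall
end

section
/- Let x₁,…,x_{4k+2} ∈ ℝ≥0 with indices modulo 4k+2, k ≥ 1. For j ∈ {1,…,2k+1}, let A(j) denote the inequality Σ_{i=1}^{k} x_{j+2i−1} + Σ_{i=k+1}^{2k} x_{j+2i} ≤ Σ_{i=0}^{k} x_{j+2i} + Σ_{i=k}^{2k} x_{j+2i+1}. Then A(j) holds for at least k+1 values of j in {1,…,2k+1}. -/
/-!
Write `A(j)` as `L(j) ≤ R(j)`. Every summand of `L(j + 1)` occurs in `R(j)` and every summand of
`L(j)` occurs in `R(j + 1)`, so `A(j)` and `A(j + 1)` cannot both fail. Shifting `j` by `2k + 1`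
merely swaps the two sums on each side, so `A` is `(2k + 1)`-periodic in `j`. A periodic
predicate that never fails at two consecutive integers holds on at least half of each period,
i.e. on at least `k + 1` of the `2k + 1` values.
-/

open Finset

attribute [local instance] Classical.propDecidable

/-- The inequality `A(j)` from the proof for wheels with `4k + 2` intervals:
`Σ_{i=1}^{k} x_{j+2i−1} + Σ_{i=k+1}^{2k} x_{j+2i} ≤
 Σ_{i=0}^{k} x_{j+2i} + Σ_{i=k}^{2k} x_{j+2i+1}`, indices taken modulo `4k + 2`. -/
def ineqA (k : ℕ) (x : ZMod (4 * k + 2) → NNReal) (j : ℕ) : Prop :=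
  (∑ i ∈ Finset.Icc 1 k, x ((j + 2 * i - 1 : ℕ) : ZMod (4 * k + 2))) +
      (∑ i ∈ Finset.Icc (k + 1) (2 * k), x ((j + 2 * i : ℕ) : ZMod (4 * k + 2))) ≤
    (∑ i ∈ Finset.Icc 0 k, x ((j + 2 * i : ℕ) : ZMod (4 * k + 2))) +
      (∑ i ∈ Finset.Icc k (2 * k), x ((j + 2 * i + 1 : ℕ) : ZMod (4 * k + 2)))

theorem sum_Icc_add' {M : Type*} [AddCommMonoid M] (f : ℕ → M) (a b c : ℕ) :
    ∑ i ∈ Icc a b, f (i + c) = ∑ i ∈ Icc (a + c) (b + c), f i := by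
  rw [← map_add_right_Icc, sum_map]
  rfl

theorem le_two_mul_card_filter_Ico_of_periodic {P : ℕ → Prop} [DecidablePred P] {n : ℕ}
    (hP : Function.Periodic P n) (hadj : ∀ j, P j ∨ P (j + 1)) (m : ℕ) :
    n ≤ 2 * #{j ∈ Ico m (m + n) | P j} := by
  have hcover : Ico m (m + n) ⊆
      {j ∈ Ico m (m + n) | P j} ∪ {j ∈ Ico (m + 1) (m + 1 + n) | P j}.image (· - 1) := by
    intro j hj
    rcases hadj j with h | h
    · exact mem_union_left _ (mem_filter.2 ⟨hj, h⟩)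
    · refine mem_union_right _ (mem_image.2 ⟨j + 1, mem_filter.2 ⟨?_, h⟩, rfl⟩)
      simp only [mem_Ico] at hj ⊢
      omega
  have hunion := (card_le_card hcover).trans (card_union_le _ _)
  have himage := card_image_le (f := (· - 1)) (s := {j ∈ Ico (m + 1) (m + 1 + n) | P j})
  simp only [Nat.card_Ico, Nat.filter_Ico_card_eq_of_periodic _ _ _ hP] at hunion himage ⊢
  omega

section Wheel

variable (k : ℕ) (x : ZMod (4 * k + 2) → NNReal)

def lhsA (j : ℕ) : NNReal :=
  (∑ i ∈ Icc 1 k, x ((j + 2 * i - 1 : ℕ) : ZMod (4 * k + 2))) +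
    ∑ i ∈ Icc (k + 1) (2 * k), x ((j + 2 * i : ℕ) : ZMod (4 * k + 2))

def rhsA (j : ℕ) : NNReal :=
  (∑ i ∈ Icc 0 k, x ((j + 2 * i : ℕ) : ZMod (4 * k + 2))) +
    ∑ i ∈ Icc k (2 * k), x ((j + 2 * i + 1 : ℕ) : ZMod (4 * k + 2))

theorem lhsA_succ_le_rhsA (j : ℕ) : lhsA k x (j + 1) ≤ rhsA k x j := by
  unfold lhsA rhsA
  simp only [add_right_comm j 1, Nat.add_sub_cancel]
  exact add_le_add (sum_le_sum_of_subset (Icc_subset_Icc_left (Nat.zero_le 1)))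
    (sum_le_sum_of_subset (Icc_subset_Icc_left (Nat.le_succ k)))

theorem lhsA_le_rhsA_succ (j : ℕ) : lhsA k x j ≤ rhsA k x (j + 1) := by
  refine add_le_add ?_ ?_
  · calc ∑ i ∈ Icc 1 k, x ((j + 2 * i - 1 : ℕ) : ZMod (4 * k + 2))
        ≤ ∑ i ∈ Icc (0 + 1) (k + 1), x ((j + 2 * i - 1 : ℕ) : ZMod (4 * k + 2)) :=
          sum_le_sum_of_subset (Icc_subset_Icc_right (Nat.le_succ k))
      _ = ∑ i ∈ Icc 0 k, x ((j + 1 + 2 * i : ℕ) : ZMod (4 * k + 2)) := by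
          rw [← sum_Icc_add']
          refine sum_congr rfl fun i _ => ?_
          congr 2
          omega
  · calc ∑ i ∈ Icc (k + 1) (2 * k), x ((j + 2 * i : ℕ) : ZMod (4 * k + 2))
        ≤ ∑ i ∈ Icc (k + 1) (2 * k + 1), x ((j + 2 * i : ℕ) : ZMod (4 * k + 2)) :=
          sum_le_sum_of_subset (Icc_subset_Icc_right (Nat.le_succ _))
      _ = ∑ i ∈ Icc k (2 * k), x ((j + 1 + 2 * i + 1 : ℕ) : ZMod (4 * k + 2)) := by
          rw [← sum_Icc_add']
          refine sum_congr rfl fun i _ => ?_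
          congr 2
          omega

theorem ineqA_or_ineqA_succ (j : ℕ) : ineqA k x j ∨ ineqA k x (j + 1) :=
  or_iff_not_imp_left.2 fun h =>
    (lhsA_succ_le_rhsA k x j).trans ((not_le.1 h).le.trans (lhsA_le_rhsA_succ k x j))

theorem apply_natCast_add_period (m : ℕ) :
    x ((m + (4 * k + 2) : ℕ) : ZMod (4 * k + 2)) = x m := by
  rw [Nat.cast_add, ZMod.natCast_self, add_zero]

theorem lhsA_add_half_period (j : ℕ) : lhsA k x (j + (2 * k + 1)) = lhsA k x j := by
  have hIcc : Icc (k + 1) (2 * k) = Icc (1 + k) (k + k) := by rw [add_comm, two_mul]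
  unfold lhsA
  rw [add_comm, hIcc, ← sum_Icc_add', ← sum_Icc_add']
  congr 1 <;> refine sum_congr rfl fun i hi => ?_
  · rw [mem_Icc] at hi
    rw [show j + (2 * k + 1) + 2 * (i + k) = j + 2 * i - 1 + (4 * k + 2) by omega,
      apply_natCast_add_period k x]
  · congr 2
    omega

theorem rhsA_add_half_period (j : ℕ) : rhsA k x (j + (2 * k + 1)) = rhsA k x j := by
  have hIcc : Icc k (2 * k) = Icc (0 + k) (k + k) := by rw [zero_add, two_mul]
  unfold rhsA
  rw [add_comm, hIcc, ← sum_Icc_add', ← sum_Icc_add']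
  congr 1 <;> refine sum_congr rfl fun i _ => ?_
  · rw [show j + (2 * k + 1) + 2 * (i + k) + 1 = j + 2 * i + (4 * k + 2) by omega,
      apply_natCast_add_period k x]
  · congr 2
    omega

theorem ineqA_periodic : Function.Periodic (ineqA k x) (2 * k + 1) := fun j => by
  show (lhsA k x _ ≤ rhsA k x _) = (lhsA k x j ≤ rhsA k x j)
  rw [lhsA_add_half_period, rhsA_add_half_period]

end Wheel

theorem stmt13_general (k : ℕ) (x : ZMod (4 * k + 2) → NNReal) :
    k + 1 ≤ ((Finset.Icc 1 (2 * k + 1)).filter fun j => ineqA k x j).card := by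
  have h := le_two_mul_card_filter_Ico_of_periodic (ineqA_periodic k x)
    (ineqA_or_ineqA_succ k x) 1
  rw [add_comm 1, Ico_add_one_right_eq_Icc] at h
  omega

/-- For nonnegative reals `x₁, …, x_{4k+2}` with indices modulo `4k + 2` and `k ≥ 1`, the
inequality `A(j)` holds for at least `k + 1` values of `j` in `{1, …, 2k + 1}`. -/
theorem stmt13 (k : ℕ) (hk : 1 ≤ k) (x : ZMod (4 * k + 2) → NNReal) :
    k + 1 ≤ ((Finset.Icc 1 (2 * k + 1)).filter fun j => ineqA k x j).card :=
  stmt13_general k x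
end

section
/- Let M be a rank-r spike with tip t and legs {x_i,y_i}, 1 ≤ i ≤ r, and let Z ⊆ S − t with |Z| = r. Then Z is a basis of M if and only if either (i) there exist indices k, ℓ with {x_k,y_k} ⊆ Z, {x_ℓ,y_ℓ} ∩ Z = ∅, and |{x_i,y_i} ∩ Z| = 1 for all i ∉ {k,ℓ}, or (ii) |{x_i,y_i} ∩ Z| = 1 for all 1 ≤ i ≤ r and Z is not a circuit of M. -/
/-!
A size-`r` set `Z` avoiding the tip can only contain circuits of two kinds: the union of two
legs, or `Z` itself when `Z ∈ C₃`. So `Z` is independent, equivalently a base, iff it contains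
at most one full leg and is not in `C₃`. The numbers `|Z ∩ {xᵢ, yᵢ}| ∈ {0, 1, 2}` sum to `r`,
so exactly as many legs are missed by `Z` as are contained in it; with at most one full leg,
`Z` is either a transversal of the legs or contains one leg, misses one, and meets every other
leg once.
-/

open Set Matroid

variable {α : Type*}

/-- `C` is a circuit of `M`: a minimal dependent subset of the ground set. -/
def IsCircuitOf (M : Matroid α) (C : Set α) : Prop :=
  C ⊆ M.E ∧ ¬ M.Indep C ∧ ∀ D, D ⊂ C → M.Indep D

/-- `M` is a rank-`r` spike with tip `t`, legs `{x i, y i}` and extra circuit family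
`C3`: the ground set is `{t, x 1, y 1, …, x r, y r}` (all elements distinct), and the
circuits of `M` are exactly the sets `{t, x i, y i}`, the sets `{x i, y i, x j, y j}` for
`i ≠ j`, the members of `C3` (which are transversals of the legs of size `r` avoiding
`t`), and all `(r + 1)`-element subsets of the ground set containing none of these. -/
structure IsSpike (M : Matroid α) (r : ℕ) (t : α) (x y : Fin r → α)
    (C3 : Set (Set α)) : Prop where
  hr : 3 ≤ r
  inj : Function.Injective fun p : Fin r × Bool => if p.2 then x p.1 else y p.1
  htx : ∀ i, t ≠ x i
  hty : ∀ i, t ≠ y i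
  ground : M.E = insert t (⋃ i, {x i, y i})
  hC3 : ∀ C ∈ C3, C ⊆ (⋃ i, {x i, y i}) ∧ C.ncard = r ∧
    ∀ i, (C ∩ {x i, y i}).ncard = 1
  circuits : ∀ C : Set α, IsCircuitOf M C ↔
    (∃ i, C = {t, x i, y i}) ∨
    (∃ i j, i ≠ j ∧ C = ({x i, y i, x j, y j} : Set α)) ∨
    C ∈ C3 ∨
    (C ⊆ M.E ∧ C.ncard = r + 1 ∧
      (∀ i, ¬ ({t, x i, y i} : Set α) ⊆ C) ∧
      (∀ i j, i ≠ j → ¬ ({x i, y i, x j, y j} : Set α) ⊆ C) ∧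
      ∀ C' ∈ C3, ¬ C' ⊆ C)

/-- The total weight of a sequence of symmetric exchanges. -/
def seqWeight (w : α → NNReal) (L : List (α × α)) : NNReal :=
  (L.map fun p => w p.1 + w p.2).sum

/-- The number of times an exchange sequence uses the element `a`. -/
def usesCount [DecidableEq α] (L : List (α × α)) (a : α) : ℕ :=
  (L.map Prod.fst).count a + (L.map Prod.snd).count a

open Finset in
lemma card_filter_eq_zero_eq_card_filter_eq_two {ι : Type*} [Fintype ι] {a : ι → ℕ}
    (hle : ∀ i, a i ≤ 2) (hsum : ∑ i, a i = Fintype.card ι) :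
    #{i | a i = 0} = #{i | a i = 2} := by
  have key : ∑ i, (a i + if a i = 0 then 1 else 0) = ∑ i, (1 + if a i = 2 then 1 else 0) :=
    Finset.sum_congr rfl fun i _ => by have := hle i; split_ifs <;> omega
  simp only [Finset.sum_add_distrib, Finset.sum_boole, Finset.sum_const, Finset.card_univ,
    smul_eq_mul, mul_one, Nat.cast_id, hsum] at key
  omega

open Finset in
lemma forall_eq_one_or_exists_eq_two_eq_zero {ι : Type*} [Fintype ι] {a : ι → ℕ}
    (hle : ∀ i, a i ≤ 2) (hsum : ∑ i, a i = Fintype.card ι)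
    (htwo : ∀ i j, a i = 2 → a j = 2 → i = j) :
    (∀ i, a i = 1) ∨ ∃ k ℓ, a k = 2 ∧ a ℓ = 0 ∧ ∀ i, i ≠ k → i ≠ ℓ → a i = 1 := by
  have hcard := card_filter_eq_zero_eq_card_filter_eq_two hle hsum
  have hle_one : #{i | a i = 2} ≤ 1 :=
    Finset.card_le_one.2 fun i hi j hj => htwo i j (by simpa using hi) (by simpa using hj)
  obtain h | h : #{i | a i = 2} = 0 ∨ #{i | a i = 2} = 1 := by omega
  · rw [h] at hcard
    simp only [Finset.card_eq_zero, Finset.filter_eq_empty_iff, Finset.mem_univ,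
      true_implies] at h hcard
    exact Or.inl fun i => by have := hle i; have := h (x := i); have := hcard (x := i); omega
  · obtain ⟨k, hk⟩ := Finset.card_eq_one.1 h
    obtain ⟨ℓ, hℓ⟩ := Finset.card_eq_one.1 (hcard.trans h)
    simp only [Finset.ext_iff, Finset.mem_filter, Finset.mem_univ, true_and,
      Finset.mem_singleton] at hk hℓ
    refine Or.inr ⟨k, ℓ, (hk k).2 rfl, (hℓ ℓ).2 rfl, fun i hik hiℓ => ?_⟩
    have := hle i; have := (hk i).not.2 hik; have := (hℓ i).not.2 hiℓ
    omega

lemma ncard_inter_pair_eq_two_iff {Z : Set α} {a b : α} (hab : a ≠ b) :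
    (Z ∩ {a, b}).ncard = 2 ↔ {a, b} ⊆ Z := by
  refine ⟨fun h => ?_, fun h => by rw [inter_eq_self_of_subset_right h, ncard_pair hab]⟩
  exact inter_eq_right.1 <|
    eq_of_subset_of_ncard_le inter_subset_right (by rw [ncard_pair hab, h]) (toFinite _)

lemma isCircuitOf_iff_isCircuit {M : Matroid α} {C : Set α} :
    IsCircuitOf M C ↔ M.IsCircuit C := by
  rw [isCircuit_iff_forall_ssubset, Dep, IsCircuitOf]
  tauto

namespace IsSpike

variable {M : Matroid α} {r : ℕ} {t : α} {x y : Fin r → α} {C3 : Set (Set α)} {Z : Set α}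

lemma x_ne_y (hM : IsSpike M r t x y C3) (i j : Fin r) : x i ≠ y j := by
  intro h
  simpa using congrArg Prod.snd (@hM.inj (i, true) (j, false) (by simpa using h))

lemma disjoint_legs (hM : IsSpike M r t x y C3) {i j : Fin r} (hij : i ≠ j) :
    Disjoint ({x i, y i} : Set α) {x j, y j} := by
  have hxx : x j ≠ x i := fun h =>
    hij (congrArg Prod.fst (@hM.inj (i, true) (j, true) (by simpa using h.symm)))
  have hyy : y j ≠ y i := fun h =>
    hij (congrArg Prod.fst (@hM.inj (i, false) (j, false) (by simpa using h.symm)))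
  simp [hxx, hyy, hM.x_ne_y, (hM.x_ne_y _ _).symm]

lemma ground_finite (hM : IsSpike M r t x y C3) : M.E.Finite := by
  rw [hM.ground]
  exact (finite_iUnion fun i => toFinite _).insert t

lemma isCircuit_legs (hM : IsSpike M r t x y C3) {i j : Fin r} (hij : i ≠ j) :
    M.IsCircuit {x i, y i, x j, y j} :=
  isCircuitOf_iff_isCircuit.1 <| (hM.circuits _).2 <| .inr <| .inl ⟨i, j, hij, rfl⟩

lemma isCircuit_of_mem (hM : IsSpike M r t x y C3) {C : Set α} (hC : C ∈ C3) : M.IsCircuit C :=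
  isCircuitOf_iff_isCircuit.1 <| (hM.circuits _).2 <| .inr <| .inr <| .inl hC

lemma isBase_iff_indep_of_ncard_eq (hM : IsSpike M r t x y C3) (hZE : Z ⊆ M.E)
    (hZ : Z.ncard = r) : M.IsBase Z ↔ M.Indep Z := by
  refine ⟨IsBase.indep, fun hI => hI.isBase_of_forall_insert fun e he hIe => ?_⟩
  have hZfin : Z.Finite := hM.ground_finite.subset hZE
  have hnot : ∀ C, M.IsCircuit C → ¬ C ⊆ insert e Z :=
    fun C hC hCZ => hC.not_indep (hIe.subset hCZ)
  -- an `(r + 1)`-set containing none of the smaller circuits is itself a circuit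
  refine hnot _ (isCircuitOf_iff_isCircuit.1 <| (hM.circuits _).2 <| .inr <| .inr <| .inr
    ⟨insert_subset he.1 hZE, ?_, fun i => hnot _ ?_,
      fun i j hij => hnot _ (hM.isCircuit_legs hij), fun C hC => hnot _ (hM.isCircuit_of_mem hC)⟩)
    subset_rfl
  · rw [ncard_insert_of_notMem he.2 hZfin, hZ]
  · exact isCircuitOf_iff_isCircuit.1 <| (hM.circuits _).2 <| .inl ⟨i, rfl⟩

lemma exists_legs_subset_or_eq_mem_of_isCircuit_subset (hM : IsSpike M r t x y C3) {C : Set α}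
    (hC : M.IsCircuit C) (hCZ : C ⊆ Z) (htZ : t ∉ Z) (hZ : Z.ncard = r) :
    (∃ i j, i ≠ j ∧ {x i, y i} ⊆ Z ∧ {x j, y j} ⊆ Z) ∨ (C = Z ∧ Z ∈ C3) := by
  have hZfin : Z.Finite := finite_of_ncard_pos (by have := hM.hr; omega)
  rcases (hM.circuits C).1 (isCircuitOf_iff_isCircuit.2 hC) with
    ⟨i, rfl⟩ | ⟨i, j, hij, rfl⟩ | hC3 | ⟨-, hcard, -⟩
  · exact absurd (hCZ (mem_insert t _)) htZ
  · exact .inl ⟨i, j, hij, subset_trans (by simp [insert_subset_iff]) hCZ,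
      subset_trans (by simp [insert_subset_iff]) hCZ⟩
  · obtain rfl := eq_of_subset_of_ncard_le hCZ (by rw [(hM.hC3 C hC3).2.1, hZ]) hZfin
    exact .inr ⟨rfl, hC3⟩
  · have := ncard_le_ncard hCZ hZfin
    omega

lemma indep_iff_of_ncard_eq (hM : IsSpike M r t x y C3) (hZE : Z ⊆ M.E) (htZ : t ∉ Z)
    (hZ : Z.ncard = r) :
    M.Indep Z ↔ (∀ i j, {x i, y i} ⊆ Z → {x j, y j} ⊆ Z → i = j) ∧ Z ∉ C3 := by
  rw [indep_iff_forall_subset_not_isCircuit hZE]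
  refine ⟨fun h => ⟨fun i j hi hj => by_contra fun hij => h _ ?_ (hM.isCircuit_legs hij),
    fun hZ3 => h Z subset_rfl (hM.isCircuit_of_mem hZ3)⟩, fun ⟨hlegs, hZ3⟩ C hCZ hC => ?_⟩
  · simp_all [insert_subset_iff]
  rcases hM.exists_legs_subset_or_eq_mem_of_isCircuit_subset hC hCZ htZ hZ with
    ⟨i, j, hij, hi, hj⟩ | ⟨-, hZ3'⟩
  exacts [hij (hlegs i j hi hj), hZ3 hZ3']

lemma sum_ncard_inter_legs (hM : IsSpike M r t x y C3) (hZ : Z ⊆ M.E \ {t}) :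
    ∑ i, (Z ∩ {x i, y i}).ncard = Z.ncard := by
  have hZfin : Z.Finite := hM.ground_finite.subset (hZ.trans sdiff_subset)
  have hZU : ⋃ i, Z ∩ {x i, y i} = Z := by
    rw [← inter_iUnion, inter_eq_left]
    exact hZ.trans (sdiff_singleton_subset_iff.2 hM.ground.subset)
  conv_rhs => rw [← hZU]
  rw [ncard_iUnion_of_finite (fun i => hZfin.inter_of_left _)
    (fun i j hij => (hM.disjoint_legs hij).mono inter_subset_right inter_subset_right),
    finsum_eq_sum_of_fintype]

lemma ncard_inter_legs_le_two (hM : IsSpike M r t x y C3) (i : Fin r) :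
    (Z ∩ {x i, y i}).ncard ≤ 2 :=
  (ncard_le_ncard inter_subset_right).trans (ncard_pair (hM.x_ne_y i i)).le

lemma ncard_inter_legs_eq_two_iff (hM : IsSpike M r t x y C3) {i : Fin r} :
    (Z ∩ {x i, y i}).ncard = 2 ↔ {x i, y i} ⊆ Z :=
  ncard_inter_pair_eq_two_iff (hM.x_ne_y i i)

lemma isBase_iff_of_ncard_eq (hM : IsSpike M r t x y C3) (hZ : Z ⊆ M.E \ {t})
    (hZcard : Z.ncard = r) :
    M.IsBase Z ↔ (∀ i j, (Z ∩ {x i, y i}).ncard = 2 → (Z ∩ {x j, y j}).ncard = 2 → i = j) ∧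
      Z ∉ C3 := by
  have hZE : Z ⊆ M.E := hZ.trans sdiff_subset
  simp only [hM.isBase_iff_indep_of_ncard_eq hZE hZcard,
    hM.indep_iff_of_ncard_eq hZE (fun h => (hZ h).2 rfl) hZcard, hM.ncard_inter_legs_eq_two_iff]

lemma isCircuit_iff_mem_of_transversal (hM : IsSpike M r t x y C3) (htZ : t ∉ Z)
    (hZ : Z.ncard = r) (htrans : ∀ i, (Z ∩ {x i, y i}).ncard = 1) : M.IsCircuit Z ↔ Z ∈ C3 := by
  refine ⟨fun hC => ?_, hM.isCircuit_of_mem⟩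
  rcases hM.exists_legs_subset_or_eq_mem_of_isCircuit_subset hC subset_rfl htZ hZ with
    ⟨i, -, -, hi, -⟩ | ⟨-, hZ3⟩
  · have := htrans i
    rw [hM.ncard_inter_legs_eq_two_iff.2 hi] at this
    omega
  · exact hZ3

end IsSpike

/-- Let `M` be a rank-`r` spike with tip `t` and legs `{x i, y i}`, and let
`Z ⊆ S - t` with `|Z| = r`. Then `Z` is a basis of `M` iff either (i) there are indices
`k, ℓ` with `{x k, y k} ⊆ Z`, `{x ℓ, y ℓ} ∩ Z = ∅` and `|{x i, y i} ∩ Z| = 1` for all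
`i ∉ {k, ℓ}`, or (ii) `|{x i, y i} ∩ Z| = 1` for all `i` and `Z` is not a circuit. -/
theorem stmt16 (M : Matroid α) (r : ℕ) (t : α) (x y : Fin r → α) (C3 : Set (Set α))
    (hM : IsSpike M r t x y C3) (Z : Set α) (hZ : Z ⊆ M.E \ {t}) (hZcard : Z.ncard = r) :
    M.IsBase Z ↔
      ((∃ k ℓ : Fin r, ({x k, y k} : Set α) ⊆ Z ∧ Z ∩ {x ℓ, y ℓ} = ∅ ∧
          ∀ i, i ≠ k → i ≠ ℓ → (Z ∩ {x i, y i}).ncard = 1) ∨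
        ((∀ i, (Z ∩ {x i, y i}).ncard = 1) ∧ ¬ IsCircuitOf M Z)) := by
  have htZ : t ∉ Z := fun h => (hZ h).2 rfl
  have hsum : ∑ i, (Z ∩ {x i, y i}).ncard = Fintype.card (Fin r) := by
    rw [Fintype.card_fin, hM.sum_ncard_inter_legs hZ, hZcard]
  rw [hM.isBase_iff_of_ncard_eq hZ hZcard, isCircuitOf_iff_isCircuit]
  constructor
  · rintro ⟨hlegs, hZ3⟩
    rcases forall_eq_one_or_exists_eq_two_eq_zero hM.ncard_inter_legs_le_two hsum hlegs with
      hall | ⟨k, ℓ, hk, hℓ, hrest⟩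
    · exact .inr ⟨hall, by rwa [hM.isCircuit_iff_mem_of_transversal htZ hZcard hall]⟩
    · exact .inl ⟨k, ℓ, hM.ncard_inter_legs_eq_two_iff.1 hk, (ncard_eq_zero).1 hℓ, hrest⟩
  · rintro (⟨k, ℓ, hk, hℓ, hrest⟩ | ⟨hall, hnc⟩)
    · have hℓ0 : (Z ∩ {x ℓ, y ℓ}).ncard = 0 := by simp [hℓ]
      have eq_k (i : Fin r) (hi : (Z ∩ {x i, y i}).ncard = 2) : i = k := by
        by_contra hik
        obtain rfl | hiℓ := eq_or_ne i ℓ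
        · omega
        · have := hrest i hik hiℓ
          omega
      refine ⟨fun i j hi hj => (eq_k i hi).trans (eq_k j hj).symm, fun hZ3 => ?_⟩
      have := (hM.hC3 Z hZ3).2.2 ℓ
      omega
    · refine ⟨fun i j hi _ => ?_, by rwa [← hM.isCircuit_iff_mem_of_transversal htZ hZcard hall]⟩
      have := hall i
      omega
end
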